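/- arXiv:1709.03293 — 5 statements merged into one kernel-verified Lean document; each statement's English description precedes it below -/
import Mathlib

section
/- For every integer n ≥ 3 with n ≠ 5, the cycle C_n is star 3-edge-choosable: for every assignment L of lists of size at least 3 to the edges of C_n, there is a star edge-coloring σ of C_n with σ(e) ∈ L(e) for every edge e. -/
/-- A star edge-coloring of `G`: a proper edge-coloring (distinct adjacent edges get
distinct colors) such that no path of length four and no cycle of length four is
bichromatic (colored by only two colors). -/
def IsStarEdgeColoring {V : Type*} {C : Type*} (G : SimpleGraph V) (σ : Sym2 V → C) : Prop :=
  (∀ ⦃e f : Sym2 V⦄, e ∈ G.edgeSet → f ∈ G.edgeSet → e ≠ f →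
      (∃ v, v ∈ e ∧ v ∈ f) → σ e ≠ σ f) ∧
  (∀ ⦃u v : V⦄ (p : G.Walk u v), p.IsPath → p.length = 4 →
      ¬ ∃ a b : C, ∀ e ∈ p.edges, σ e = a ∨ σ e = b) ∧
  (∀ ⦃u : V⦄ (p : G.Walk u u), p.IsCycle → p.length = 4 →
      ¬ ∃ a b : C, ∀ e ∈ p.edges, σ e = a ∨ σ e = b)

/-- A set of edges is a matching if its edges are pairwise non-adjacent. -/
def IsMatchingSet {V : Type*} (M : Set (Sym2 V)) : Prop :=
  ∀ e ∈ M, ∀ f ∈ M, e ≠ f → ∀ v : V, v ∈ e → v ∉ f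

/-- Two edges are adjacent (at distance `1` in the line graph). -/
def EdgesAdj {V : Type*} (e f : Sym2 V) : Prop :=
  e ≠ f ∧ ∃ v : V, v ∈ e ∧ v ∈ f

/-- Two edges of `G` are at distance at most `2` in the line graph of `G`. -/
def EdgeDistLE2 {V : Type*} (G : SimpleGraph V) (e f : Sym2 V) : Prop :=
  EdgesAdj e f ∨ ∃ g ∈ G.edgeSet, EdgesAdj e g ∧ EdgesAdj g f

namespace StarChoose
open SimpleGraph

/-- Pick an element of `s` avoiding `a` and `b` (exists when `3 ≤ s.card`). -/
def pick (s : Finset ℕ) (a b : ℕ) : ℕ :=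
  if h : (s \ {a, b}).Nonempty then (s \ {a, b}).min' h else 0

lemma pick_spec {s : Finset ℕ} (h : 3 ≤ s.card) (a b : ℕ) :
    pick s a b ∈ s ∧ pick s a b ≠ a ∧ pick s a b ≠ b := by
  have hcard : ({a, b} : Finset ℕ).card ≤ 2 := by
    apply le_trans (Finset.card_insert_le _ _); simp
  have hne : (s \ ({a, b} : Finset ℕ)).Nonempty := by
    rw [← Finset.card_pos]
    have := Finset.le_card_sdiff ({a, b} : Finset ℕ) s
    omega
  have : pick s a b ∈ s \ ({a, b} : Finset ℕ) := by
    rw [pick, dif_pos hne]; exact Finset.min'_mem _ hne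
  simp only [Finset.mem_sdiff, Finset.mem_insert, Finset.mem_singleton] at this
  tauto

def dSeq (Ls : ℕ → Finset ℕ) : ℕ → ℕ
  | 0 => pick (Ls 0) 0 0
  | 1 => pick (Ls 1) (dSeq Ls 0) (dSeq Ls 0)
  | (k+2) => pick (Ls (k+2)) (dSeq Ls (k+1)) (dSeq Ls k)

variable {Ls : ℕ → Finset ℕ} (hcard : ∀ k, 3 ≤ (Ls k).card)

include hcard

lemma dSeq_mem (k : ℕ) : dSeq Ls k ∈ Ls k := by
  match k with
  | 0 => exact (pick_spec (hcard 0) _ _).1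
  | 1 => exact (pick_spec (hcard 1) _ _).1
  | (k+2) => exact (pick_spec (hcard (k+2)) _ _).1

lemma dSeq_succ (k : ℕ) : dSeq Ls (k+1) ≠ dSeq Ls k := by
  match k with
  | 0 => exact (pick_spec (hcard 1) _ _).2.1
  | (k+1) => exact (pick_spec (hcard (k+2)) _ _).2.1

lemma dSeq_two (k : ℕ) : dSeq Ls (k+2) ≠ dSeq Ls k :=
  (pick_spec (hcard (k+2)) _ _).2.2


omit hcard

lemma card3_ne {a b p : ℕ} (h : 3 ≤ ({a, b, p} : Finset ℕ).card) :
    a ≠ b ∧ a ≠ p ∧ b ≠ p := by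
  refine ⟨?_, ?_, ?_⟩ <;> rintro rfl
  · have h1 : ({a, a, p} : Finset ℕ).card ≤ ({a, p} : Finset ℕ).card :=
      Finset.card_le_card (by intro t ht; simp at ht ⊢; tauto)
    have h2 : ({a, p} : Finset ℕ).card ≤ 2 :=
      le_trans (Finset.card_insert_le _ _) (by simp)
    omega
  · have h1 : ({a, b, a} : Finset ℕ).card ≤ ({a, b} : Finset ℕ).card :=
      Finset.card_le_card (by intro t ht; simp at ht ⊢; tauto)
    have h2 : ({a, b} : Finset ℕ).card ≤ 2 :=
      le_trans (Finset.card_insert_le _ _) (by simp)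
    omega
  · have h1 : ({a, b, b} : Finset ℕ).card ≤ ({a, b} : Finset ℕ).card :=
      Finset.card_le_card (by intro t ht; simp at ht ⊢; tauto)
    have h2 : ({a, b} : Finset ℕ).card ≤ 2 :=
      le_trans (Finset.card_insert_le _ _) (by simp)
    omega

lemma card3_le {a b p : ℕ} : ({a, b, p} : Finset ℕ).card ≤ 3 := by
  apply le_trans (Finset.card_insert_le _ _)
  apply Nat.succ_le_succ
  apply le_trans (Finset.card_insert_le _ _); simp

/-- The endgame: choosing the colors of the last three edges. -/
lemma endgame {P X Y : Finset ℕ} (hP : 3 ≤ P.card) (hX : 3 ≤ X.card) (hY : 3 ≤ Y.card)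
    {a b q s p : ℕ} (hba : b ≠ a) (hpP : p ∈ P) (hpq : p ≠ q) (hps : p ≠ s) (hqs : q ≠ s) :
    ∃ z x y, z ∈ P ∧ x ∈ X ∧ y ∈ Y ∧ z ≠ q ∧ x ≠ z ∧ y ≠ x ∧ y ≠ a ∧
      (s ≠ z ∨ q ≠ x) ∧ (q ≠ x ∨ z ≠ y) ∧ (z ≠ y ∨ x ≠ a) ∧ (x ≠ a ∨ y ≠ b) := by
  by_cases hA : ∃ y ∈ Y, y ≠ a ∧ y ≠ b ∧ y ≠ p
  · -- case A
    obtain ⟨y, hyY, hya, hyb, hyp⟩ := hA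
    obtain ⟨hxX, hxp, hxy⟩ := pick_spec hX p y
    exact ⟨p, _, y, hpP, hxX, hyY, hpq, hxp, Ne.symm hxy, hya,
      Or.inl (Ne.symm hps), Or.inr (Ne.symm hyp), Or.inl (Ne.symm hyp), Or.inr hyb⟩
  · -- ¬A : Y = {a, b, p}
    have hYsub : Y ⊆ {a, b, p} := by
      intro t ht
      simp only [Finset.mem_insert, Finset.mem_singleton]
      by_contra hc; push_neg at hc; exact hA ⟨t, ht, hc.1, hc.2.1, hc.2.2⟩
    have hYeq : Y = ({a, b, p} : Finset ℕ) :=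
      Finset.eq_of_subset_of_card_le hYsub (le_trans card3_le hY)
    obtain ⟨hab, hap, hbp⟩ := card3_ne (hYeq ▸ hY)
    have hbY : b ∈ Y := by rw [hYeq]; simp
    have hpY : p ∈ Y := by rw [hYeq]; simp
    by_cases hB : ∃ x ∈ X, x ≠ p ∧ x ≠ q ∧ x ≠ a
    · -- case B
      obtain ⟨x, hxX, hxp, hxq, hxa⟩ := hB
      obtain ⟨hyY, hyx, hya⟩ := pick_spec hY x a
      exact ⟨p, x, _, hpP, hxX, hyY, hpq, hxp, hyx, hya,
        Or.inr (Ne.symm hxq), Or.inl (Ne.symm hxq), Or.inr hxa, Or.inl hxa⟩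
    · -- ¬B : X = {p, q, a}
      have hXsub : X ⊆ {p, q, a} := by
        intro t ht
        simp only [Finset.mem_insert, Finset.mem_singleton]
        by_contra hc; push_neg at hc; exact hB ⟨t, ht, hc.1, hc.2.1, hc.2.2⟩
      have hXeq : X = ({p, q, a} : Finset ℕ) :=
        Finset.eq_of_subset_of_card_le hXsub (le_trans card3_le hX)
      obtain ⟨_, hpa, hqa⟩ := card3_ne (hXeq ▸ hX)
      have hpX : p ∈ X := by rw [hXeq]; simp
      have hqX : q ∈ X := by rw [hXeq]; simp
      have haX : a ∈ X := by rw [hXeq]; simp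
      by_cases hbq : b = q
      · -- case D : b = q
        by_cases haP : a ∈ P
        · -- D1 : z = a, x = p, y = b
          exact ⟨a, p, b, haP, hpX, hbY, Ne.symm hqa, hpa, hbp, hba,
            Or.inr (Ne.symm hpq), Or.inl (Ne.symm hpq), Or.inl hab, Or.inl hpa⟩
        · by_cases hD : ∃ z ∈ P, z ≠ b ∧ z ≠ s ∧ z ≠ p
          · -- D2 : z, x = a, y = p
            obtain ⟨z, hzP, hzb, hzs, hzp⟩ := hD
            have hza : a ≠ z := fun h => haP (h ▸ hzP)
            exact ⟨z, a, p, hzP, haX, hpY, hbq ▸ hzb, hza, hpa, hpa,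
              Or.inl (Ne.symm hzs), Or.inl (hbq ▸ hba), Or.inl hzp, Or.inr (Ne.symm hbp)⟩
          · -- D3 : P = {b, s, p}, z = s, x = p, y = b
            have hPsub : P ⊆ {b, s, p} := by
              intro t ht
              simp only [Finset.mem_insert, Finset.mem_singleton]
              by_contra hc; push_neg at hc; exact hD ⟨t, ht, hc.1, hc.2.1, hc.2.2⟩
            have hsP : s ∈ P := by
              rw [Finset.eq_of_subset_of_card_le hPsub (le_trans card3_le hP)]; simp
            have hsb : s ≠ b := by rw [hbq]; exact Ne.symm hqs
            exact ⟨s, p, b, hsP, hpX, hbY, Ne.symm hqs, hps, hbp, hba,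
              Or.inr (Ne.symm hpq), Or.inl (Ne.symm hpq), Or.inl hsb, Or.inl hpa⟩
      · -- case C : z = p, x = q, y = b
        exact ⟨p, q, b, hpP, hqX, hbY, hpq, Ne.symm hpq, hbq, hba,
          Or.inl (Ne.symm hps), Or.inr (Ne.symm hbp), Or.inl (Ne.symm hbp), Or.inl hqa⟩

/-- Core combinatorial lemma: a cyclic sequence of colors from the lists, which is
proper (`A`) and has no bichromatic window of four consecutive edges (`B`). -/
lemma core (n : ℕ) (hn : 3 ≤ n) (hn5 : n ≠ 5) (Ls : ℕ → Finset ℕ)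
    (hcard : ∀ k, 3 ≤ (Ls k).card) :
    ∃ c : ℕ → ℕ, (∀ k, k < n → c k ∈ Ls k) ∧
      (∀ k, k < n → c k ≠ c ((k+1) % n)) ∧
      (∀ k, k < n → c k ≠ c ((k+2) % n) ∨ c ((k+1) % n) ≠ c ((k+3) % n)) := by
  have hpick : ∀ (j : ℕ) (a b : ℕ), ∃ x, x ∈ Ls j ∧ x ≠ a ∧ x ≠ b :=
    fun j a b => ⟨pick _ a b, pick_spec (hcard j) a b⟩
  obtain ⟨u0, hu0, -, -⟩ := hpick 0 0 0
  obtain ⟨u1, hu1, h10, -⟩ := hpick 1 u0 u0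
  obtain ⟨u2, hu2, h20, h21⟩ := hpick 2 u0 u1
  rcases eq_or_lt_of_le hn with h3 | hn4
  · -- n = 3
    subst h3
    refine ⟨fun k => if k = 0 then u0 else if k = 1 then u1 else u2, ?_, ?_, ?_⟩
    · intro k hk; interval_cases k
      · exact hu0
      · exact hu1
      · exact hu2
    · intro k hk; interval_cases k
      · exact Ne.symm h10
      · exact Ne.symm h21
      · exact h20
    · intro k hk; interval_cases k
      · exact Or.inl (Ne.symm h20)
      · exact Or.inl h10
      · exact Or.inl h21
  · rcases Nat.lt_or_ge n 5 with hn4' | hn6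
    · -- n = 4
      have h4 : n = 4 := by omega
      subst h4
      obtain ⟨u3, hu3, h32, h30⟩ := hpick 3 u2 u0
      refine ⟨fun k => if k = 0 then u0 else if k = 1 then u1 else if k = 2 then u2 else u3,
        ?_, ?_, ?_⟩
      · intro k hk; interval_cases k
        · exact hu0
        · exact hu1
        · exact hu2
        · exact hu3
      · intro k hk; interval_cases k
        · exact Ne.symm h10
        · exact Ne.symm h21
        · exact Ne.symm h32
        · exact h30
      · intro k hk; interval_cases k
        · exact Or.inl (Ne.symm h20)
        · exact Or.inr h20
        · exact Or.inl h20
        · exact Or.inr (Ne.symm h20)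
    · -- n ≥ 6
      have hn6' : 6 ≤ n := by omega
      obtain ⟨z, x, y, hzP, hxX, hyY, hzq, hxz, hyx, hya, hB5, hB4, hB3, hB2⟩ :=
        endgame (hcard (n-3)) (hcard (n-2)) (hcard (n-1))
          (a := dSeq Ls 0) (b := dSeq Ls 1) (q := dSeq Ls (n-4)) (s := dSeq Ls (n-5))
          (p := dSeq Ls (n-3))
          (dSeq_succ hcard 0)
          (dSeq_mem hcard (n-3))
          (by have := dSeq_succ hcard (n-4); rwa [show n-4+1 = n-3 by omega] at this)
          (by have := dSeq_two hcard (n-5); rwa [show n-5+2 = n-3 by omega] at this)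
          (by have := dSeq_succ hcard (n-5); rwa [show n-5+1 = n-4 by omega] at this)
      have Elt : ∀ m, m < n-3 →
          (if m = n-3 then z else if m = n-2 then x else if m = n-1 then y else dSeq Ls m)
            = dSeq Ls m := by
        intro m hm
        rw [if_neg (by omega), if_neg (by omega), if_neg (by omega)]
      have E3 : (if n-3 = n-3 then z else if n-3 = n-2 then x else if n-3 = n-1 then y
          else dSeq Ls (n-3)) = z := by rw [if_pos rfl]
      have E2 : (if n-2 = n-3 then z else if n-2 = n-2 then x else if n-2 = n-1 then y
          else dSeq Ls (n-2)) = x := by rw [if_neg (by omega), if_pos rfl]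
      have E1 : (if n-1 = n-3 then z else if n-1 = n-2 then x else if n-1 = n-1 then y
          else dSeq Ls (n-1)) = y := by rw [if_neg (by omega), if_neg (by omega), if_pos rfl]
      refine ⟨fun k => if k = n-3 then z else if k = n-2 then x else if k = n-1 then y
        else dSeq Ls k, ?_, ?_, ?_⟩
      · intro k hk
        simp only []
        rcases (by omega : k < n-3 ∨ k = n-3 ∨ k = n-2 ∨ k = n-1) with h | h | h | h
        · rw [Elt k h]; exact dSeq_mem hcard k
        · subst h; rw [E3]; exact hzP
        · subst h; rw [E2]; exact hxX
        · subst h; rw [E1]; exact hyY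
      · -- condition A
        intro k hk
        simp only []
        rcases (by omega : k ≤ n-5 ∨ k = n-4 ∨ k = n-3 ∨ k = n-2 ∨ k = n-1) with h | h | h | h | h
        · rw [Nat.mod_eq_of_lt (by omega), Elt k (by omega), Elt (k+1) (by omega)]
          exact (dSeq_succ hcard k).symm
        · subst h
          rw [Nat.mod_eq_of_lt (by omega), show n-4+1 = n-3 by omega, Elt (n-4) (by omega), E3]
          exact Ne.symm hzq
        · subst h
          rw [Nat.mod_eq_of_lt (by omega), show n-3+1 = n-2 by omega, E3, E2]
          exact Ne.symm hxz
        · subst h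
          rw [Nat.mod_eq_of_lt (by omega), show n-2+1 = n-1 by omega, E2, E1]
          exact Ne.symm hyx
        · subst h
          rw [show (n-1+1) % n = 0 by rw [show n-1+1 = n by omega]; exact Nat.mod_self n,
            E1, Elt 0 (by omega)]
          exact hya
      · -- condition B
        intro k hk
        simp only []
        rcases (by omega : k ≤ n-7 ∨ k = n-6 ∨ k = n-5 ∨ k = n-4 ∨ k = n-3 ∨ k = n-2 ∨ k = n-1)
          with h | h | h | h | h | h | h
        · left
          rw [Nat.mod_eq_of_lt (by omega), Elt k (by omega), Elt (k+2) (by omega)]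
          exact (dSeq_two hcard k).symm
        · subst h; left
          rw [Nat.mod_eq_of_lt (by omega), show n-6+2 = n-4 by omega,
            Elt (n-6) (by omega), Elt (n-4) (by omega)]
          have := dSeq_two hcard (n-6)
          rw [show n-6+2 = n-4 by omega] at this
          exact this.symm
        · subst h
          rw [Nat.mod_eq_of_lt (by omega), Nat.mod_eq_of_lt (by omega),
            Nat.mod_eq_of_lt (by omega), show n-5+1 = n-4 by omega,
            show n-5+2 = n-3 by omega, show n-5+3 = n-2 by omega,
            Elt (n-5) (by omega), Elt (n-4) (by omega), E3, E2]
          exact hB5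
        · subst h
          rw [Nat.mod_eq_of_lt (by omega), Nat.mod_eq_of_lt (by omega),
            Nat.mod_eq_of_lt (by omega), show n-4+1 = n-3 by omega,
            show n-4+2 = n-2 by omega, show n-4+3 = n-1 by omega,
            Elt (n-4) (by omega), E3, E2, E1]
          exact hB4
        · subst h
          rw [Nat.mod_eq_of_lt (by omega), Nat.mod_eq_of_lt (by omega),
            show n-3+1 = n-2 by omega, show n-3+2 = n-1 by omega,
            show (n-3+3) % n = 0 by rw [show n-3+3 = n by omega]; exact Nat.mod_self n,
            E3, E2, E1, Elt 0 (by omega)]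
          exact hB3
        · subst h
          have m2 : (n-2+2) % n = 0 := by rw [show n-2+2 = n by omega]; exact Nat.mod_self n
          have m3 : (n-2+3) % n = 1 := by
            rw [show n-2+3 = n+1 by omega, Nat.add_mod_left]
            exact Nat.mod_eq_of_lt (by omega)
          have mA : (n-2+1) % n = n-1 := by
            rw [show n-2+1 = n-1 by omega]; exact Nat.mod_eq_of_lt (by omega)
          rw [m2, mA, m3, E2, E1, Elt 0 (by omega), Elt 1 (by omega)]
          exact hB2
        · subst h; right
          have m1 : (n-1+1) % n = 0 := by rw [show n-1+1 = n by omega]; exact Nat.mod_self n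
          have m3 : (n-1+3) % n = 2 := by
            rw [show n-1+3 = n+2 by omega, Nat.add_mod_left]
            exact Nat.mod_eq_of_lt (by omega)
          rw [m1, m3, Elt 0 (by omega), Elt 2 (by omega)]
          exact (dSeq_two hcard 0).symm



variable {n : ℕ} [NeZero n]

/-- The `i`-th edge of the cycle. -/
def E (i : Fin n) : Sym2 (Fin n) := s(i, i+1)

lemma two_step_ne (hn : 3 ≤ n) (u : Fin n) : u + 1 + 1 ≠ u := by
  intro h
  have hu := u.isLt
  have h1 : ((u.val + 1 % n) % n + 1 % n) % n = u.val := by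
    simpa [Fin.add_def, Fin.val_one'] using congrArg Fin.val h
  rw [Nat.mod_eq_of_lt (show 1 < n by omega)] at h1
  by_cases c1 : u.val + 1 = n
  · rw [c1, Nat.mod_self] at h1
    rw [Nat.mod_eq_of_lt (by omega)] at h1
    omega
  · rw [Nat.mod_eq_of_lt (by omega : u.val + 1 < n)] at h1
    by_cases c2 : u.val + 1 + 1 = n
    · rw [c2, Nat.mod_self] at h1; omega
    · rw [Nat.mod_eq_of_lt (by omega)] at h1; omega

lemma E_inj (hn : 3 ≤ n) {i j : Fin n} (h : E i = E j) : i = j := by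
  rw [E, E, Sym2.eq_iff] at h
  rcases h with ⟨h1, -⟩ | ⟨h1, h2⟩
  · exact h1
  · exfalso
    apply two_step_ne hn j
    rw [← h1]
    exact h2

lemma step (hn : 3 ≤ n) {u v : Fin n} (h : (cycleGraph n).Adj u v) :
    v = u + 1 ∨ u = v + 1 := by
  rw [SimpleGraph.cycleGraph_adj'] at h
  rcases h with h | h
  · right
    have h1 : u - v = 1 := by
      apply Fin.ext; rw [h, Fin.val_one']; exact (Nat.mod_eq_of_lt (by omega)).symm
    exact sub_eq_iff_eq_add'.mp h1
  · left
    have h1 : v - u = 1 := by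
      apply Fin.ext; rw [h, Fin.val_one']; exact (Nat.mod_eq_of_lt (by omega)).symm
    exact sub_eq_iff_eq_add'.mp h1

lemma adj_E (hn : 3 ≤ n) (i : Fin n) : (cycleGraph n).Adj i (i+1) := by
  rw [SimpleGraph.cycleGraph_adj']
  right
  rw [add_sub_cancel_left, Fin.val_one']
  exact Nat.mod_eq_of_lt (by omega)

lemma E_mem_edgeSet (hn : 3 ≤ n) (i : Fin n) : E i ∈ (cycleGraph n).edgeSet := adj_E hn i

lemma edge_eq (hn : 3 ≤ n) {e : Sym2 (Fin n)} (he : e ∈ (cycleGraph n).edgeSet) :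
    ∃ i : Fin n, e = E i := by
  induction e with
  | _ u v =>
    rw [SimpleGraph.mem_edgeSet, SimpleGraph.cycleGraph_adj'] at he
    rcases he with h | h
    · refine ⟨v, ?_⟩
      have h1 : u - v = 1 := by
        apply Fin.ext; rw [h, Fin.val_one']; exact (Nat.mod_eq_of_lt (by omega)).symm
      rw [sub_eq_iff_eq_add'] at h1
      rw [E, h1]; exact Sym2.eq_swap
    · refine ⟨u, ?_⟩
      have h1 : v - u = 1 := by
        apply Fin.ext; rw [h, Fin.val_one']; exact (Nat.mod_eq_of_lt (by omega)).symm
      rw [sub_eq_iff_eq_add'] at h1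
      rw [E, h1]

lemma mem_E {w : Fin n} {i : Fin n} (h : w ∈ E i) : w = i ∨ w = i + 1 := by
  rwa [E, Sym2.mem_iff] at h

/-- Every path of length 4 in the cycle passes through four consecutive edges. -/
lemma path4 (hn : 3 ≤ n) {u v : Fin n} (p : (cycleGraph n).Walk u v)
    (hp : p.IsPath) (hl : p.length = 4) :
    ∃ i : Fin n, E i ∈ p.edges ∧ E (i+1) ∈ p.edges ∧ E (i+1+1) ∈ p.edges ∧
      E (i+1+1+1) ∈ p.edges := by
  cases p with
  | nil => simp at hl
  | cons h0 q0 =>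
  cases q0 with
  | nil => simp at hl
  | cons h1 q1 =>
  cases q1 with
  | nil => simp at hl
  | cons h2 q2 =>
  cases q2 with
  | nil => simp at hl
  | cons h3 q3 =>
  cases q3 with
  | cons h4 q4 => simp [Walk.length_cons] at hl
  | nil =>
  rename_i v1 v2 v3
  have hnd := hp.support_nodup
  simp [List.nodup_cons] at hnd
  obtain ⟨⟨-, h02, -, -⟩, ⟨-, h13, -⟩, ⟨-, h24⟩, -⟩ := hnd
  rcases step hn h0 with s0 | s0
  · -- forward
    rcases step hn h1 with s1 | s1
    swap
    · exact absurd (add_right_cancel (s0.symm.trans s1)) h02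
    rcases step hn h2 with s2 | s2
    swap
    · exact absurd (add_right_cancel (s1.symm.trans s2)) h13
    rcases step hn h3 with s3 | s3
    swap
    · exact absurd (add_right_cancel (s2.symm.trans s3)) h24
    refine ⟨u, ?_, ?_, ?_, ?_⟩
    · rw [E, ← s0]; simp
    · rw [E, ← s0, ← s1]; simp
    · rw [E, ← s0, ← s1, ← s2]; simp
    · rw [E, ← s0, ← s1, ← s2, ← s3]; simp
  · -- backward
    rcases step hn h1 with s1 | s1
    · exact absurd (s0.trans s1.symm) h02
    rcases step hn h2 with s2 | s2
    · exact absurd (s1.trans s2.symm) h13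
    rcases step hn h3 with s3 | s3
    · exact absurd (s2.trans s3.symm) h24
    refine ⟨v, ?_, ?_, ?_, ?_⟩
    · rw [E, ← s3, Sym2.eq_swap]; simp
    · rw [E, ← s3, ← s2, Sym2.eq_swap]; simp
    · rw [E, ← s3, ← s2, ← s1, Sym2.eq_swap]; simp
    · rw [E, ← s3, ← s2, ← s1, ← s0, Sym2.eq_swap]; simp

/-- Every cycle of length 4 in the cycle graph passes through four consecutive edges. -/
lemma cycle4 (hn : 3 ≤ n) {u : Fin n} (p : (cycleGraph n).Walk u u)
    (hp : p.IsCycle) (hl : p.length = 4) :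
    ∃ i : Fin n, E i ∈ p.edges ∧ E (i+1) ∈ p.edges ∧ E (i+1+1) ∈ p.edges ∧
      E (i+1+1+1) ∈ p.edges := by
  cases p with
  | nil => simp at hl
  | cons h0 q0 =>
  cases q0 with
  | nil => simp at hl
  | cons h1 q1 =>
  cases q1 with
  | nil => simp at hl
  | cons h2 q2 =>
  cases q2 with
  | nil => simp at hl
  | cons h3 q3 =>
  cases q3 with
  | cons h4 q4 => simp [Walk.length_cons] at hl
  | nil =>
  rename_i v1 v2 v3
  have hnd := hp.support_nodup
  simp [List.nodup_cons] at hnd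
  obtain ⟨⟨-, h13, h1u⟩, ⟨-, h2u⟩, h3u⟩ := hnd
  rcases step hn h0 with s0 | s0
  · -- forward
    rcases step hn h1 with s1 | s1
    swap
    · exact absurd (add_right_cancel (s0.symm.trans s1)) (fun hh => h2u hh.symm)
    rcases step hn h2 with s2 | s2
    swap
    · exact absurd (add_right_cancel (s1.symm.trans s2)) h13
    rcases step hn h3 with s3 | s3
    swap
    · exact absurd (s3.trans s0.symm).symm h13
    refine ⟨u, ?_, ?_, ?_, ?_⟩
    · rw [E, ← s0]; simp
    · rw [E, ← s0, ← s1]; simp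
    · rw [E, ← s0, ← s1, ← s2]; simp
    · rw [E, ← s0, ← s1, ← s2, ← s3]; simp
  · -- backward
    rcases step hn h1 with s1 | s1
    · exact absurd (s0.trans s1.symm) (fun hh => h2u hh.symm)
    rcases step hn h2 with s2 | s2
    · exact absurd (s1.trans s2.symm) h13
    rcases step hn h3 with s3 | s3
    · exact absurd (add_right_cancel (s0.symm.trans s3)) h13
    refine ⟨u, ?_, ?_, ?_, ?_⟩
    · rw [E, ← s3, Sym2.eq_swap]; simp
    · rw [E, ← s3, ← s2, Sym2.eq_swap]; simp
    · rw [E, ← s3, ← s2, ← s1, Sym2.eq_swap]; simp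
    · rw [E, ← s3, ← s2, ← s1, ← s0, Sym2.eq_swap]; simp

end StarChoose

open Fin.NatCast

/-- For every `n ≥ 3` with `n ≠ 5`, the cycle `C_n` is star 3-edge-choosable. -/
theorem cycle_star_three_edge_choosable (n : ℕ) (hn : 3 ≤ n) (hn5 : n ≠ 5)
    (L : Sym2 (Fin n) → Finset ℕ)
    (hL : ∀ e ∈ (SimpleGraph.cycleGraph n).edgeSet, 3 ≤ (L e).card) :
    ∃ σ : Sym2 (Fin n) → ℕ, IsStarEdgeColoring (SimpleGraph.cycleGraph n) σ ∧
      ∀ e ∈ (SimpleGraph.cycleGraph n).edgeSet, σ e ∈ L e := by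
  classical
  haveI : NeZero n := ⟨by omega⟩
  have hcard : ∀ k : ℕ, 3 ≤ (L (StarChoose.E ((k : Fin n)))).card :=
    fun k => hL _ (StarChoose.E_mem_edgeSet hn _)
  obtain ⟨c, hmem, hA, hB⟩ :=
    StarChoose.core n hn hn5 (fun k => L (StarChoose.E ((k : Fin n)))) hcard
  have v1 : ∀ i : Fin n, (i+1).val = (i.val + 1) % n := by
    intro i
    rw [Fin.add_def, Fin.val_one', Nat.mod_eq_of_lt (show 1 < n by omega)]
  have A' : ∀ i : Fin n, c i.val ≠ c ((i+1)).val := by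
    intro i
    rw [v1]
    exact hA i.val i.isLt
  have B' : ∀ i : Fin n, c i.val ≠ c ((i+1+1)).val ∨ c ((i+1)).val ≠ c ((i+1+1+1)).val := by
    intro i
    have h2 : (i+1+1).val = (i.val + 2) % n := by
      rw [v1, v1, Nat.mod_add_mod]
    have h3 : (i+1+1+1).val = (i.val + 3) % n := by
      rw [v1, h2, Nat.mod_add_mod]
    rw [h2, h3, v1]
    exact hB i.val i.isLt
  set σ : Sym2 (Fin n) → ℕ :=
    fun e => if h : ∃ i : Fin n, e = StarChoose.E i then c h.choose.val else 0 with hσ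
  have σspec : ∀ i : Fin n, σ (StarChoose.E i) = c i.val := by
    intro i
    have hex : ∃ j : Fin n, StarChoose.E i = StarChoose.E j := ⟨i, rfl⟩
    show (if h : ∃ j : Fin n, StarChoose.E i = StarChoose.E j then c h.choose.val else 0)
      = c i.val
    rw [dif_pos hex]
    exact congrArg (fun t : Fin n => c t.val) (StarChoose.E_inj hn hex.choose_spec.symm)
  refine ⟨σ, ⟨?_, ?_, ?_⟩, ?_⟩
  · -- properness
    intro e f he hf hef hshare
    obtain ⟨w, hwe, hwf⟩ := hshare
    obtain ⟨i, rfl⟩ := StarChoose.edge_eq hn he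
    obtain ⟨j, rfl⟩ := StarChoose.edge_eq hn hf
    rw [σspec i, σspec j]
    have hij : i ≠ j := fun h => hef (by rw [h])
    rcases StarChoose.mem_E hwe with h1 | h1 <;> rcases StarChoose.mem_E hwf with h2 | h2
    · exact absurd (h1.symm.trans h2) hij
    · rw [h1.symm.trans h2]
      exact (A' j).symm
    · rw [← h1.symm.trans h2]
      exact A' i
    · exact absurd (add_right_cancel (h1.symm.trans h2)) hij
  · -- no bichromatic path of length 4
    intro u v p hp hl hbi
    obtain ⟨aa, bb, hcol⟩ := hbi
    obtain ⟨i, m0, m1, m2, m3⟩ := StarChoose.path4 hn p hp hl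
    have g0 := hcol _ m0
    have g1 := hcol _ m1
    have g2 := hcol _ m2
    have g3 := hcol _ m3
    rw [σspec] at g0 g1 g2 g3
    have a0 := A' i
    have a1 := A' (i+1)
    have a2 := A' (i+1+1)
    rcases B' i with hBB | hBB <;>
      rcases g0 with h0 | h0 <;> rcases g1 with h1 | h1 <;>
      rcases g2 with h2 | h2 <;> rcases g3 with h3 | h3 <;> omega
  · -- no bichromatic cycle of length 4
    intro u p hp hl hbi
    obtain ⟨aa, bb, hcol⟩ := hbi
    obtain ⟨i, m0, m1, m2, m3⟩ := StarChoose.cycle4 hn p hp hl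
    have g0 := hcol _ m0
    have g1 := hcol _ m1
    have g2 := hcol _ m2
    have g3 := hcol _ m3
    rw [σspec] at g0 g1 g2 g3
    have a0 := A' i
    have a1 := A' (i+1)
    have a2 := A' (i+1+1)
    rcases B' i with hBB | hBB <;>
      rcases g0 with h0 | h0 <;> rcases g1 with h1 | h1 <;>
      rcases g2 with h2 | h2 <;> rcases g3 with h3 | h3 <;> omega
  · -- list membership
    intro e he
    obtain ⟨i, rfl⟩ := StarChoose.edge_eq hn he
    rw [σspec]
    have hm := hmem i.val i.isLt
    rwa [Fin.cast_val_eq_self] at hm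
end

section
/- Let C = e_1 e_2 e_3 e_4 e_5 be a cycle of length 5 and let L be a list assignment to its edges such that |L(e_i)| ≥ 3 for every i ∈ {1,...,5} and |L(e_1) ∪ L(e_2) ∪ L(e_3) ∪ L(e_4) ∪ L(e_5)| ≥ 4. Then C admits a star edge-coloring σ with σ(e_i) ∈ L(e_i) for every i. -/
/-! ### Auxiliary combinatorial development -/

/-- Abstract star edge-coloring condition for `C₅` with edges indexed by `Fin 5`. -/
def Star5 (c : Fin 5 → ℕ) : Prop :=
  (∀ i, c i ≠ c (i + 1)) ∧ ∀ i, ¬(c (i + 2) = c i ∧ c (i + 3) = c (i + 1))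

def Good5 (L : Fin 5 → Finset ℕ) : Prop :=
  ∃ c : Fin 5 → ℕ, (∀ i, c i ∈ L i) ∧ Star5 c

lemma V1 {a b c d : ℕ} (hab : a ≠ b) (hac : a ≠ c) (had : a ≠ d) (hbc : b ≠ c)
    (hbd : b ≠ d) (hcd : c ≠ d) : Star5 ![a, b, a, c, d] := by
  constructor <;> intro i <;> fin_cases i <;>
    simp_all [Matrix.cons_val_zero, Matrix.cons_val_one, Matrix.head_cons] <;> omega

lemma V2 {c0 c1 c2 c3 c4 : ℕ} (h1 : c1 ≠ c0) (h2a : c2 ≠ c1) (h2b : c2 ≠ c0)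
    (h3a : c3 ≠ c2) (h3b : c3 ≠ c0) (h3c : c3 ≠ c1) (h4a : c4 ≠ c3) (h4b : c4 ≠ c0) :
    Star5 ![c0, c1, c2, c3, c4] := by
  constructor <;> intro i <;> fin_cases i <;>
    simp_all [Matrix.cons_val_zero, Matrix.cons_val_one, Matrix.head_cons] <;> omega

lemma V3 {c0 c1 c2 c4 : ℕ} (h1 : c1 ≠ c0) (h2a : c2 ≠ c1) (h2b : c2 ≠ c0)
    (h4a : c4 ≠ c1) (h4b : c4 ≠ c0) (h4c : c4 ≠ c2) :
    Star5 ![c0, c1, c2, c1, c4] := by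
  constructor <;> intro i <;> fin_cases i <;>
    simp_all [Matrix.cons_val_zero, Matrix.cons_val_one, Matrix.head_cons] <;> omega

lemma V4 {c0 c1 c2' c2 : ℕ} (h1 : c1 ≠ c0) (ha : c2' ≠ c1) (hb : c2' ≠ c0) (hc : c2' ≠ c2)
    (hd : c2 ≠ c0) (he : c2 ≠ c1) :
    Star5 ![c0, c1, c2', c2, c1] := by
  constructor <;> intro i <;> fin_cases i <;>
    simp_all [Matrix.cons_val_zero, Matrix.cons_val_one, Matrix.head_cons] <;> omega

lemma sel5 {L : Fin 5 → Finset ℕ} {a b c d e : ℕ} (h0 : a ∈ L 0) (h1 : b ∈ L 1)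
    (h2 : c ∈ L 2) (h3 : d ∈ L 3) (h4 : e ∈ L 4) : ∀ i, ![a, b, c, d, e] i ∈ L i := by
  intro i
  fin_cases i
  exacts [h0, h1, h2, h3, h4]

lemma pick2 {s : Finset ℕ} (h : 3 ≤ s.card) (a b : ℕ) : ∃ x ∈ s, x ≠ a ∧ x ≠ b := by
  have : 0 < (s \ {a, b}).card := by
    have := Finset.card_le_card_sdiff_add_card (s := s) (t := {a, b})
    have hab : ({a, b} : Finset ℕ).card ≤ 2 := Finset.card_insert_le _ _ |>.trans (by simp)
    omega
  obtain ⟨x, hx⟩ := Finset.card_pos.mp this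
  simp only [Finset.mem_sdiff, Finset.mem_insert, Finset.mem_singleton] at hx
  exact ⟨x, hx.1, by tauto, by tauto⟩

lemma four_distinct {s : Finset ℕ} (h : 4 ≤ s.card) :
    ∃ a ∈ s, ∃ b ∈ s, ∃ c ∈ s, ∃ d ∈ s, a ≠ b ∧ a ≠ c ∧ a ≠ d ∧ b ≠ c ∧ b ≠ d ∧ c ≠ d := by
  obtain ⟨a, ha⟩ := Finset.card_pos.mp (by omega : 0 < s.card)
  have h2 : 3 ≤ (s.erase a).card := by have := Finset.card_erase_of_mem ha; omega
  obtain ⟨b, hb⟩ := Finset.card_pos.mp (by omega : 0 < (s.erase a).card)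
  have h3 : 2 ≤ ((s.erase a).erase b).card := by
    have := Finset.card_erase_of_mem hb; omega
  obtain ⟨c, hc⟩ := Finset.card_pos.mp (by omega : 0 < ((s.erase a).erase b).card)
  have h4 : 1 ≤ (((s.erase a).erase b).erase c).card := by
    have := Finset.card_erase_of_mem hc; omega
  obtain ⟨d, hd⟩ := Finset.card_pos.mp (by omega : 0 < (((s.erase a).erase b).erase c).card)
  simp only [Finset.mem_erase] at hb hc hd
  exact ⟨a, ha, b, hb.2, c, hc.2.2, d, hd.2.2.2, (Ne.symm hb.1), (Ne.symm hc.2.1),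
    (Ne.symm hd.2.2.1), (Ne.symm hc.1), (Ne.symm hd.2.1), (Ne.symm hd.1)⟩

lemma card3_le (a b c : ℕ) : ({a, b, c} : Finset ℕ).card ≤ 3 := by
  have a1 := Finset.card_insert_le a ({b, c} : Finset ℕ)
  have a2 := Finset.card_insert_le b ({c} : Finset ℕ)
  have a3 : ({c} : Finset ℕ).card = 1 := Finset.card_singleton c
  omega

lemma eq3 {s : Finset ℕ} {a b c : ℕ} (h3 : 3 ≤ s.card) (hsub : s ⊆ {a, b, c}) :
    s = {a, b, c} :=
  Finset.eq_of_subset_of_card_le hsub ((card3_le a b c).trans h3)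

lemma Good5.rot {L : Fin 5 → Finset ℕ} (t : Fin 5) (h : Good5 (fun i => L (i + t))) :
    Good5 L := by
  obtain ⟨c, hsel, h1, h2⟩ := h
  have hsel' : ∀ i, c i ∈ L (i + t) := hsel
  refine ⟨fun i => c (i - t), fun i => ?_, fun i => ?_, fun i => ?_⟩
  · have := hsel' (i - t)
    rw [show i - t + t = i by grind] at this
    exact this
  · have := h1 (i - t)
    show c (i - t) ≠ c (i + 1 - t)
    rwa [show i - t + 1 = i + 1 - t by grind] at this
  · have := h2 (i - t)
    show ¬(c (i + 2 - t) = c (i - t) ∧ c (i + 3 - t) = c (i + 1 - t))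
    rwa [show i - t + 2 = i + 2 - t by grind, show i - t + 3 = i + 3 - t by grind,
      show i - t + 1 = i + 1 - t by grind] at this

lemma Good5.refl {L : Fin 5 → Finset ℕ} (h : Good5 (fun i => L (-i - 1))) : Good5 L := by
  obtain ⟨c, hsel, h1, h2⟩ := h
  have hsel' : ∀ i, c i ∈ L (-i - 1) := hsel
  refine ⟨fun i => c (-i - 1), fun i => ?_, fun i => ?_, fun i => ?_⟩
  · have := hsel' (-i - 1)
    rw [show -(-i - 1) - 1 = i by grind] at this
    exact this
  · have := h1 (-i - 2)
    rw [show (-i - 2 + 1 : Fin 5) = -i - 1 by grind] at this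
    show c (-i - 1) ≠ c (-(i + 1) - 1)
    rw [show (-(i + 1) - 1 : Fin 5) = -i - 2 by grind]
    exact this.symm
  · have := h2 (-i - 4)
    rw [show (-i - 4 + 2 : Fin 5) = -i - 2 by grind, show (-i - 4 + 3 : Fin 5) = -i - 1 by grind,
      show (-i - 4 + 1 : Fin 5) = -i - 3 by grind] at this
    show ¬(c (-(i + 2) - 1) = c (-i - 1) ∧ c (-(i + 3) - 1) = c (-(i + 1) - 1))
    rw [show (-(i + 2) - 1 : Fin 5) = -i - 3 by grind, show (-(i + 3) - 1 : Fin 5) = -i - 4 by grind,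
      show (-(i + 1) - 1 : Fin 5) = -i - 2 by grind]
    exact fun hh => this ⟨hh.2.symm, hh.1.symm⟩

lemma core5 {L : Fin 5 → Finset ℕ} (h3 : ∀ i, 3 ≤ (L i).card) {x : ℕ} (hx0 : x ∈ L 0)
    (hx : x ∉ L 1 ∨ x ∉ L 2) : Good5 L := by
  obtain ⟨c1, hc1L, hc1x, -⟩ := pick2 (h3 1) x x
  obtain ⟨c2, hc2L, hc2x, hc2c1⟩ := pick2 (h3 2) x c1
  by_cases h33 : ∃ c3 ∈ L 3, c3 ≠ c2 ∧ c3 ≠ x ∧ c3 ≠ c1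
  · obtain ⟨c3, hc3L, h3a, h3b, h3c⟩ := h33
    obtain ⟨c4, hc4L, h4b, h4a⟩ := pick2 (h3 4) x c3
    exact ⟨![x, c1, c2, c3, c4], sel5 hx0 hc1L hc2L hc3L hc4L,
      V2 hc1x hc2c1 hc2x h3a h3b h3c h4a h4b⟩
  · push_neg at h33
    obtain ⟨c3, hc3L, hc3a, hc3b⟩ := pick2 (h3 3) c2 x
    have hc1L3 : c1 ∈ L 3 := (h33 c3 hc3L hc3a hc3b) ▸ hc3L
    have hL3 : L 3 = {c2, x, c1} := by
      refine eq3 (h3 3) fun y hy => ?_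
      simp only [Finset.mem_insert, Finset.mem_singleton]
      by_cases h1 : y = c2
      · tauto
      · by_cases h2 : y = x
        · tauto
        · exact Or.inr (Or.inr (h33 y hy h1 h2))
    by_cases h44 : ∃ c4 ∈ L 4, c4 ≠ c1 ∧ c4 ≠ x ∧ c4 ≠ c2
    · obtain ⟨c4, hc4L, h4a, h4b, h4c⟩ := h44
      exact ⟨![x, c1, c2, c1, c4], sel5 hx0 hc1L hc2L hc1L3 hc4L,
        V3 hc1x hc2c1 hc2x h4a h4b h4c⟩
    · push_neg at h44
      have hL4 : L 4 = {c1, x, c2} := by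
        refine eq3 (h3 4) fun y hy => ?_
        simp only [Finset.mem_insert, Finset.mem_singleton]
        by_cases h1 : y = c1
        · tauto
        · by_cases h2 : y = x
          · tauto
          · exact Or.inr (Or.inr (h44 y hy h1 h2))
      have hc1L4 : c1 ∈ L 4 := by rw [hL4]; simp
      have hc2L4 : c2 ∈ L 4 := by rw [hL4]; simp
      have hc2L3 : c2 ∈ L 3 := by rw [hL3]; simp
      by_cases h22 : ∃ y ∈ L 2, y ≠ c1 ∧ y ≠ x ∧ y ≠ c2
      · obtain ⟨c2', hc2'L, ha, hb, hc⟩ := h22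
        exact ⟨![x, c1, c2', c2, c1], sel5 hx0 hc1L hc2'L hc2L3 hc1L4,
          V4 hc1x ha hb hc hc2x hc2c1⟩
      · push_neg at h22
        have hL2 : L 2 = {c1, x, c2} := by
          refine eq3 (h3 2) fun y hy => ?_
          simp only [Finset.mem_insert, Finset.mem_singleton]
          by_cases h1 : y = c1
          · tauto
          · by_cases h2 : y = x
            · tauto
            · exact Or.inr (Or.inr (h22 y hy h1 h2))
        have hxL2 : x ∈ L 2 := by rw [hL2]; simp
        have hxL1 : x ∉ L 1 := hx.resolve_right fun h => h hxL2
        obtain ⟨c1', hc1'L, ha, hb⟩ := pick2 (h3 1) c1 c2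
        have hc1'x : c1' ≠ x := fun h => hxL1 (h ▸ hc1'L)
        exact ⟨![x, c1', c2, c1, c2], sel5 hx0 hc1'L hc2L hc1L3 hc2L4,
          V2 hc1'x (Ne.symm hb) hc2x (Ne.symm hc2c1) hc1x (Ne.symm ha) hc2c1 hc2x⟩

lemma good5_of_lists (L : Fin 5 → Finset ℕ) (h3 : ∀ i, 3 ≤ (L i).card)
    (h4 : 4 ≤ (Finset.univ.biUnion L).card) : Good5 L := by
  by_cases hall : ∀ i, L i = L 0
  · have hU : Finset.univ.biUnion L = L 0 := by
      ext y
      simp only [Finset.mem_biUnion, Finset.mem_univ, true_and]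
      exact ⟨fun ⟨i, hi⟩ => (hall i) ▸ hi, fun h => ⟨0, h⟩⟩
    rw [hU] at h4
    obtain ⟨a, ha, b, hb, cc, hcc, d, hd, hab, hac, had, hbc, hbd, hcd⟩ := four_distinct h4
    refine ⟨![a, b, a, cc, d], sel5 ha ?_ ?_ ?_ ?_, V1 hab hac had hbc hbd hcd⟩
    · rw [hall 1]; exact hb
    · rw [hall 2]; exact ha
    · rw [hall 3]; exact hcc
    · rw [hall 4]; exact hd
  · push_neg at hall
    obtain ⟨j, hj⟩ := hall
    have hex : ∃ (a b : Fin 5) (x : ℕ), x ∈ L a ∧ x ∉ L b := by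
      by_cases hs : L j ⊆ L 0
      · have hns : ¬ L 0 ⊆ L j := fun h => hj (Finset.Subset.antisymm hs h)
        obtain ⟨x, hx1, hx2⟩ := Finset.not_subset.mp hns
        exact ⟨0, j, x, hx1, hx2⟩
      · obtain ⟨x, hx1, hx2⟩ := Finset.not_subset.mp hs
        exact ⟨j, 0, x, hx1, hx2⟩
    obtain ⟨a, b, x, hxa, hxb⟩ := hex
    apply Good5.rot a
    have h3' : ∀ i : Fin 5, 3 ≤ (L (i + a)).card := fun i => h3 _
    have hx0 : x ∈ L (0 + a) := by rwa [zero_add]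
    have hd0 : b - a ≠ 0 := sub_ne_zero.mpr fun h => hxb (h ▸ hxa)
    obtain ⟨d, hxd, hdne⟩ : ∃ d : Fin 5, x ∉ L (d + a) ∧ d ≠ 0 :=
      ⟨b - a, by rw [show b - a + a = b by grind]; exact hxb, hd0⟩
    fin_cases d
    · exact absurd rfl hdne
    · exact core5 (L := fun i => L (i + a)) (fun i => h3' i) hx0 (Or.inl hxd)
    · exact core5 (L := fun i => L (i + a)) (fun i => h3' i) hx0 (Or.inr hxd)
    · -- reflect + rotate to reduce to the `x ∉ L' 2` case
      apply Good5.refl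
      apply Good5.rot 4
      have hm1 : x ∈ L (-((0 : Fin 5) + 4) - 1 + a) := by
        rw [show (-((0 : Fin 5) + 4) - 1 : Fin 5) = 0 by decide]; exact hx0
      have hm2 : x ∉ L (-((2 : Fin 5) + 4) - 1 + a) := by
        rw [show (-((2 : Fin 5) + 4) - 1 : Fin 5) = 3 by decide]; exact hxd
      exact core5 (L := fun i => L (-(i + 4) - 1 + a)) (fun i => h3' _) hm1 (Or.inr hm2)
    · apply Good5.refl
      apply Good5.rot 4
      have hm1 : x ∈ L (-((0 : Fin 5) + 4) - 1 + a) := by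
        rw [show (-((0 : Fin 5) + 4) - 1 : Fin 5) = 0 by decide]; exact hx0
      have hm2 : x ∉ L (-((1 : Fin 5) + 4) - 1 + a) := by
        rw [show (-((1 : Fin 5) + 4) - 1 : Fin 5) = 4 by decide]; exact hxd
      exact core5 (L := fun i => L (-(i + 4) - 1 + a)) (fun i => h3' _) hm1 (Or.inl hm2)

/-! ### The 5-cycle graph -/

open SimpleGraph

def E5 (i : Fin 5) : Sym2 (Fin 5) := s(i, i + 1)

def idx5 (e : Sym2 (Fin 5)) : Fin 5 :=
  if e = E5 1 then 1 else if e = E5 2 then 2 else if e = E5 3 then 3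
  else if e = E5 4 then 4 else 0

lemma E5_mem : ∀ i, E5 i ∈ (cycleGraph 5).edgeSet := by decide

lemma edge_eq : ∀ e ∈ (cycleGraph 5).edgeSet, e = E5 (idx5 e) := by decide

lemma idx5_E5 : ∀ i, idx5 (E5 i) = i := by decide

lemma adj_idx : ∀ i j : Fin 5, E5 i ≠ E5 j → (∃ v, v ∈ E5 i ∧ v ∈ E5 j) →
    j = i + 1 ∨ i = j + 1 := by decide

lemma fin5_ne (k : Fin 5) : k + 1 ≠ k ∧ k + 2 ≠ k ∧ k + 3 ≠ k ∧ k + 4 ≠ k ∧ k - 1 ≠ k := by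
  revert k; decide

lemma two_colors {a b v1 v2 v3 v4 : ℕ} (h1 : v1 = a ∨ v1 = b) (h2 : v2 = a ∨ v2 = b)
    (h3 : v3 = a ∨ v3 = b) (h4 : v4 = a ∨ v4 = b) (d12 : v1 ≠ v2) (d23 : v2 ≠ v3)
    (d34 : v3 ≠ v4) : v3 = v1 ∧ v4 = v2 := by
  rcases h1 with rfl | rfl <;> rcases h2 with rfl | rfl <;> rcases h3 with rfl | rfl <;>
    rcases h4 with rfl | rfl <;> omega

lemma missing5 (l : List (Fin 5)) (hlen : l.length = 4) (hnd : l.Nodup) :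
    ∃ k : Fin 5, ∀ j : Fin 5, j ≠ k → j ∈ l := by
  have hcard : l.toFinset.card = 4 := by rw [List.toFinset_card_of_nodup hnd, hlen]
  obtain ⟨k, hk⟩ : ∃ k, k ∉ l.toFinset := by
    by_contra h
    push_neg at h
    have := Finset.card_le_card (fun y (_ : y ∈ Finset.univ) => h y)
    rw [hcard, Finset.card_univ, Fintype.card_fin] at this
    omega
  refine ⟨k, fun j hj => ?_⟩
  have hsub : l.toFinset ⊆ Finset.univ.erase k := fun y hy =>
    Finset.mem_erase.mpr ⟨fun h => hk (h ▸ hy), Finset.mem_univ y⟩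
  have hcard2 : (Finset.univ.erase k : Finset (Fin 5)).card = 4 := by
    rw [Finset.card_erase_of_mem (Finset.mem_univ k), Finset.card_univ, Fintype.card_fin]
  have heq : l.toFinset = Finset.univ.erase k :=
    Finset.eq_of_subset_of_card_le hsub (by omega)
  have : j ∈ l.toFinset := by
    rw [heq]
    exact Finset.mem_erase.mpr ⟨hj, Finset.mem_univ j⟩
  exact List.mem_toFinset.mp this

/-- If every edge of the 5-cycle gets a list of at least 3 colors and the union of the
lists over the edges contains at least 4 colors, then `C_5` has a star edge-coloring
choosing each edge's color from its list. -/
theorem cycle_five_star_L_edge_colorable (L : Sym2 (Fin 5) → Finset ℕ)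
    (hL : ∀ e ∈ (SimpleGraph.cycleGraph 5).edgeSet, 3 ≤ (L e).card)
    (hunion : 4 ≤ (⋃ e ∈ (SimpleGraph.cycleGraph 5).edgeSet, (L e : Set ℕ)).ncard) :
    ∃ σ : Sym2 (Fin 5) → ℕ, IsStarEdgeColoring (SimpleGraph.cycleGraph 5) σ ∧
      ∀ e ∈ (SimpleGraph.cycleGraph 5).edgeSet, σ e ∈ L e := by
  have h3M : ∀ i, 3 ≤ ((fun i => L (E5 i)) i).card := fun i => hL _ (E5_mem i)
  have hUeq : (⋃ e ∈ (cycleGraph 5).edgeSet, (L e : Set ℕ)) =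
      ↑(Finset.univ.biUnion (fun i => L (E5 i))) := by
    ext y
    simp only [Set.mem_iUnion, Finset.coe_biUnion, Set.mem_iUnion, Finset.mem_coe,
      Finset.mem_univ, exists_prop, Set.iUnion_true, Finset.mem_biUnion, true_and]
    constructor
    · rintro ⟨e, he, hy⟩
      refine ⟨idx5 e, ?_⟩
      rw [← edge_eq e he]
      exact hy
    · rintro ⟨i, hy⟩
      exact ⟨E5 i, E5_mem i, hy⟩
  have h4M : 4 ≤ (Finset.univ.biUnion (fun i => L (E5 i))).card := by
    rw [hUeq, Set.ncard_coe_finset] at hunion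
    exact hunion
  obtain ⟨c, hsel, hadjc, hWc⟩ := good5_of_lists _ h3M h4M
  have hsel' : ∀ i, c i ∈ L (E5 i) := hsel
  refine ⟨fun e => c (idx5 e), ⟨?_, ?_, ?_⟩, ?_⟩
  · -- properness
    intro e f he hf hne hsh
    have hmain := adj_idx (idx5 e) (idx5 f)
      (by rw [← edge_eq e he, ← edge_eq f hf]; exact hne)
      (by rw [← edge_eq e he, ← edge_eq f hf]; exact hsh)
    show c (idx5 e) ≠ c (idx5 f)
    rcases hmain with h | h
    · rw [h]
      exact hadjc (idx5 e)
    · rw [h]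
      exact (hadjc (idx5 f)).symm
  · -- no bichromatic path of length 4
    rintro u v p hp hl ⟨a, b, hab⟩
    have hnd : (p.edges.map idx5).Nodup := by
      refine List.Nodup.map_on ?_ hp.isTrail.edges_nodup
      intro e he f hf hef
      rw [edge_eq e (p.edges_subset_edgeSet he), edge_eq f (p.edges_subset_edgeSet hf), hef]
    have hlen : (p.edges.map idx5).length = 4 := by
      rw [List.length_map, p.length_edges, hl]
    obtain ⟨k, hk⟩ := missing5 _ hlen hnd
    have key : ∀ j : Fin 5, j ≠ k → c j = a ∨ c j = b := by
      intro j hj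
      obtain ⟨e, he, hidx⟩ := List.mem_map.mp (hk j hj)
      have h' : c (idx5 e) = a ∨ c (idx5 e) = b := hab e he
      rwa [hidx] at h'
    obtain ⟨hn1, hn2, hn3, hn4, -⟩ := fin5_ne k
    have p12 : c (k + 1) ≠ c (k + 2) := by
      have := hadjc (k + 1); rwa [show k + 1 + 1 = k + 2 by grind] at this
    have p23 : c (k + 2) ≠ c (k + 3) := by
      have := hadjc (k + 2); rwa [show k + 2 + 1 = k + 3 by grind] at this
    have p34 : c (k + 3) ≠ c (k + 4) := by
      have := hadjc (k + 3); rwa [show k + 3 + 1 = k + 4 by grind] at this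
    obtain ⟨q1, q2⟩ := two_colors (key (k + 1) hn1) (key (k + 2) hn2) (key (k + 3) hn3)
      (key (k + 4) hn4) p12 p23 p34
    have hW := hWc (k + 1)
    rw [show k + 1 + 2 = k + 3 by grind, show k + 1 + 3 = k + 4 by grind,
      show k + 1 + 1 = k + 2 by grind] at hW
    exact hW ⟨q1, q2⟩
  · -- no 4-cycles exist in C₅ at all
    rintro u p hcyc hl ⟨a, b, -⟩
    have hnd : (p.edges.map idx5).Nodup := by
      refine List.Nodup.map_on ?_ hcyc.isCircuit.isTrail.edges_nodup
      intro e he f hf hef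
      rw [edge_eq e (p.edges_subset_edgeSet he), edge_eq f (p.edges_subset_edgeSet hf), hef]
    have hlen : (p.edges.map idx5).length = 4 := by
      rw [List.length_map, p.length_edges, hl]
    obtain ⟨k, hk⟩ := missing5 _ hlen hnd
    have hE : ∀ j : Fin 5, j ≠ k → E5 j ∈ p.edges := by
      intro j hj
      obtain ⟨e, he, hidx⟩ := List.mem_map.mp (hk j hj)
      rw [← hidx, ← edge_eq e (p.edges_subset_edgeSet he)]
      exact he
    have hsup : ∀ w : Fin 5, w ∈ p.support := by
      intro w
      by_cases hw : w ≠ k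
      · have h1 : s(w, w + 1) ∈ p.edges := hE w hw
        exact p.fst_mem_support_of_mem_edges h1
      · push_neg at hw
        have hne : w - 1 ≠ k := by rw [← hw]; exact (fin5_ne w).2.2.2.2
        have h1 : s(w - 1, w - 1 + 1) ∈ p.edges := hE (w - 1) hne
        rw [show w - 1 + 1 = w by grind] at h1
        exact p.snd_mem_support_of_mem_edges h1
    cases p with
    | nil => simp at hl
    | cons hadj q =>
      have hnd2 : q.support.Nodup := by
        have := hcyc.support_nodup
        rwa [SimpleGraph.Walk.support_cons, List.tail_cons] at this
      have hlen2 : q.support.length = 4 := by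
        rw [SimpleGraph.Walk.length_support]
        simp only [SimpleGraph.Walk.length_cons] at hl
        omega
      have hsub : (Finset.univ : Finset (Fin 5)) ⊆ q.support.toFinset := by
        intro w' _
        have hw' := hsup w'
        rw [SimpleGraph.Walk.support_cons] at hw'
        rcases List.mem_cons.mp hw' with h | h
        · refine List.mem_toFinset.mpr ?_
          rw [h]
          exact q.end_mem_support
        · exact List.mem_toFinset.mpr h
      have h5 : (5 : ℕ) ≤ q.support.toFinset.card := by
        have := Finset.card_le_card hsub
        rwa [Finset.card_univ, Fintype.card_fin] at this
      have h4' : q.support.toFinset.card = 4 := by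
        rw [List.toFinset_card_of_nodup hnd2, hlen2]
      omega
  · -- colors are chosen from the lists
    intro e he
    have h' := hsel' (idx5 e)
    rw [← edge_eq e he] at h'
    exact h'
end

section
/- Let G be a graph with maximum degree at most 3, let H be a spanning subgraph of G in which every vertex of G has degree exactly 2 within its cycle component or lies on a cycle of H (i.e., every vertex of G is contained in some cycle of H), and let M = E(G) \ E(H) be a matching. Then for every edge e of G there are at most four edges of M at distance at most 2 from e, where the distance between two edges is their distance in the line graph of G (adjacent edges are at distance 1). -/
/-- Every vertex of the graph `H` lies on some cycle of `H`. -/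
def EveryVertexOnCycle {V : Type*} (H : SimpleGraph V) : Prop :=
  ∀ v : V, ∃ (u : V) (c : H.Walk u u), c.IsCycle ∧ v ∈ c.support

/-- Let `G` have maximum degree at most 3, let `H` be a spanning subgraph of `G` such
that every vertex of `G` lies on a cycle of `H`, and suppose the remaining edges
`M = E(G) \ E(H)` form a matching.  Then for every edge `e` of `G` there are at most
four edges of `M` (other than `e` itself) at distance at most 2 from `e` in the line
graph. -/
theorem matching_edges_at_distance_at_most_two {V : Type*} [Fintype V] [DecidableEq V]
    (G : SimpleGraph V) [DecidableRel G.Adj] (hdeg : ∀ v : V, G.degree v ≤ 3)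
    (H : SimpleGraph V) (hHG : H ≤ G) (hcyc : EveryVertexOnCycle H)
    (M : Set (Sym2 V)) (hM : M = G.edgeSet \ H.edgeSet) (hmatch : IsMatchingSet M) :
    ∀ e ∈ G.edgeSet, {f : Sym2 V | f ∈ M ∧ f ≠ e ∧ EdgeDistLE2 G e f}.ncard ≤ 4 := by
  classical
  intro e he
  induction e using Sym2.inductionOn with
  | hf u v =>
  rw [SimpleGraph.mem_edgeSet] at he
  set T : Finset V := (G.neighborFinset u \ {v}) ∪ (G.neighborFinset v \ {u}) with hT
  set S : Set (Sym2 V) := {f : Sym2 V | f ∈ M ∧ f ≠ s(u, v) ∧ EdgeDistLE2 G s(u, v) f} with hS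
  have hMG : M ⊆ G.edgeSet := by rw [hM]; exact Set.diff_subset
  -- auxiliary: if a vertex of e is in an edge f of G with f ≠ e, the other endpoint is in T
  have aux : ∀ (f : Sym2 V), f ∈ G.edgeSet → f ≠ s(u, v) → ∀ w : V, w ∈ s(u, v) →
      w ∈ f → ∃ t ∈ T, t ∈ f := by
    intro f hfG hfe w hwe hwf
    set x := Sym2.Mem.other' hwf with hx
    have hfx : s(w, x) = f := Sym2.other_spec' hwf
    have hadj : G.Adj w x := by rw [← SimpleGraph.mem_edgeSet, hfx]; exact hfG
    have hxf : x ∈ f := by rw [← hfx]; simp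
    rcases Sym2.mem_iff.1 hwe with rfl | rfl
    · refine ⟨x, ?_, hxf⟩
      have hxv : x ≠ v := by
        intro h; apply hfe; rw [← hfx, h]
      simp [hT, hadj, hxv]
    · refine ⟨x, ?_, hxf⟩
      have hxu : x ≠ u := by
        intro h; apply hfe; rw [← hfx, h, Sym2.eq_swap]
      simp [hT, hadj, hxu]
  -- every edge in S contains a vertex of T
  have key : ∀ f ∈ S, ∃ t ∈ T, t ∈ f := by
    intro f hf
    obtain ⟨hfM, hfe, hdist⟩ := hf
    have hfG : f ∈ G.edgeSet := hMG hfM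
    rcases hdist with ⟨hne, w, hwe, hwf⟩ | ⟨g, hgG, ⟨hge, w, hwe, hwg⟩, ⟨hgf, z, hzg, hzf⟩⟩
    · exact aux f hfG hfe w hwe hwf
    · -- g = s(w, y) with w ∈ e
      set y := Sym2.Mem.other' hwg with hy
      have hgy : s(w, y) = g := Sym2.other_spec' hwg
      have hadj : G.Adj w y := by rw [← SimpleGraph.mem_edgeSet, hgy]; exact hgG
      have hzwy : z = w ∨ z = y := by rw [← hgy] at hzg; exact Sym2.mem_iff.1 hzg
      rcases hzwy with rfl | rfl
      · exact aux f hfG hfe z hwe hzf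
      · rcases Sym2.mem_iff.1 hwe with rfl | rfl
        · refine ⟨y, ?_, hzf⟩
          have hyv : y ≠ v := by
            intro h; apply hge; rw [← hgy, h]
          simp [hT, hadj, hyv]
        · refine ⟨y, ?_, hzf⟩
          have hyu : y ≠ u := by
            intro h; apply hge; rw [← hgy, h, Sym2.eq_swap]
          simp [hT, hadj, hyu]
  -- the choice function
  set φ : Sym2 V → V := fun f => if h : ∃ t, t ∈ T ∧ t ∈ f then h.choose else u with hφ
  have hφT : ∀ f ∈ S, φ f ∈ T ∧ φ f ∈ f := by
    intro f hf
    obtain ⟨t, ht, htf⟩ := key f hf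
    have h : ∃ t, t ∈ T ∧ t ∈ f := ⟨t, ht, htf⟩
    simp only [hφ, dif_pos h]
    exact h.choose_spec
  have hinj : Set.InjOn φ S := by
    intro f1 hf1 f2 hf2 hEq
    by_contra hne
    obtain ⟨h1T, h1f⟩ := hφT f1 hf1
    obtain ⟨h2T, h2f⟩ := hφT f2 hf2
    exact hmatch f1 hf1.1 f2 hf2.1 hne (φ f1) h1f (hEq ▸ h2f)
  have himg : φ '' S ⊆ (T : Set V) := by
    rintro t ⟨f, hf, rfl⟩
    exact (hφT f hf).1
  have h1 : S.ncard ≤ (T : Set V).ncard := by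
    rw [← Set.ncard_image_of_injOn hinj]
    exact Set.ncard_le_ncard himg T.finite_toSet
  have h2 : (T : Set V).ncard = T.card := Set.ncard_coe_finset T
  have h3 : T.card ≤ 4 := by
    have hu : (G.neighborFinset u \ {v}).card ≤ 2 := by
      have hv : ({v} : Finset V) ⊆ G.neighborFinset u := by
        simp [SimpleGraph.mem_neighborFinset, he]
      rw [Finset.card_sdiff_of_subset hv]
      have := hdeg u
      rw [SimpleGraph.degree] at this
      simp only [Finset.card_singleton]
      omega
    have hv : (G.neighborFinset v \ {u}).card ≤ 2 := by
      have hu' : ({u} : Finset V) ⊆ G.neighborFinset v := by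
        simp [SimpleGraph.mem_neighborFinset, he.symm]
      rw [Finset.card_sdiff_of_subset hu']
      have := hdeg v
      rw [SimpleGraph.degree] at this
      simp only [Finset.card_singleton]
      omega
    calc T.card ≤ _ + _ := Finset.card_union_le _ _
      _ ≤ 4 := by omega
  omega
end

section
/- Let G be a connected graph with maximum degree at most 3 that contains a bridge and has at most one vertex of degree less than 3. Then G contains a pendant block B (a block of G containing at most one cut vertex of G) such that every vertex of B has degree 3 in G. -/
/-- `B` has no cut vertex: removing any vertex of `B` keeps the subgraph of `G`
induced on `B` connected (or `B` is a single vertex). -/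
def NoCutVertexIn {V : Type*} (G : SimpleGraph V) (B : Set V) : Prop :=
  ∀ v ∈ B, B = {v} ∨ (G.induce (B \ {v})).Connected

/-- `B` is a block of `G`: a maximal set of vertices inducing a connected subgraph
without a cut vertex. -/
def IsBlock {V : Type*} (G : SimpleGraph V) (B : Set V) : Prop :=
  (G.induce B).Connected ∧ NoCutVertexIn G B ∧
    ∀ B' : Set V, B ⊆ B' → (G.induce B').Connected → NoCutVertexIn G B' → B' = B

/-- `v` is a cut vertex of the connected graph `G`: deleting `v` disconnects `G`. -/
def IsCutVertex {V : Type*} (G : SimpleGraph V) (v : V) : Prop :=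
  G.Connected ∧ ¬ (G.induce {u : V | u ≠ v}).Connected


namespace PendantAux

variable {V : Type*} {G : SimpleGraph V}

def ReachIn (G : SimpleGraph V) (S : Set V) (u v : V) : Prop :=
  ∃ p : G.Walk u v, ∀ w ∈ p.support, w ∈ S

namespace ReachIn

variable {S T : Set V} {u v w : V}

lemma refl (hu : u ∈ S) : ReachIn G S u u :=
  ⟨SimpleGraph.Walk.nil, by simp [hu]⟩

lemma symm (h : ReachIn G S u v) : ReachIn G S v u := by
  obtain ⟨p, hp⟩ := h
  exact ⟨p.reverse, by simpa using hp⟩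

lemma trans (h : ReachIn G S u v) (h' : ReachIn G S v w) : ReachIn G S u w := by
  obtain ⟨p, hp⟩ := h; obtain ⟨q, hq⟩ := h'
  refine ⟨p.append q, ?_⟩
  intro z hz
  rcases (SimpleGraph.Walk.mem_support_append_iff _ _).1 hz with h | h
  · exact hp z h
  · exact hq z h

lemma single (h : G.Adj u v) (hu : u ∈ S) (hv : v ∈ S) : ReachIn G S u v := by
  refine ⟨h.toWalk, ?_⟩
  intro z hz
  simp only [SimpleGraph.Adj.toWalk, SimpleGraph.Walk.support_cons,
    SimpleGraph.Walk.support_nil, List.mem_cons, List.mem_singleton] at hz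
  rcases hz with rfl | rfl | h
  · exact hu
  · exact hv
  · cases h

lemma mono (hST : S ⊆ T) (h : ReachIn G S u v) : ReachIn G T u v := by
  obtain ⟨p, hp⟩ := h
  exact ⟨p, fun z hz => hST (hp z hz)⟩

lemma mem_left (h : ReachIn G S u v) : u ∈ S := by
  obtain ⟨p, hp⟩ := h
  exact hp u p.start_mem_support

lemma mem_right (h : ReachIn G S u v) : v ∈ S := by
  obtain ⟨p, hp⟩ := h
  exact hp v p.end_mem_support

end ReachIn

lemma reachIn_reachSet [DecidableEq V] {S : Set V} {u v : V} (h : ReachIn G S u v) :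
    ReachIn G {z | z ∈ S ∧ ReachIn G S u z} u v := by
  obtain ⟨p, hp⟩ := h
  refine ⟨p, fun w hw => ⟨hp w hw, ⟨p.takeUntil w hw, fun z hz =>
    hp z (SimpleGraph.Walk.support_takeUntil_subset _ hw hz)⟩⟩⟩

lemma exists_crossing_edge {S A : Set V} {u v : V} (h : ReachIn G S u v)
    (hu : u ∈ A) (hv : v ∉ A) :
    ∃ a b, a ∈ A ∧ a ∈ S ∧ b ∈ S ∧ b ∉ A ∧ G.Adj a b := by
  obtain ⟨p, hp⟩ := h
  induction p with
  | nil => exact absurd hu hv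
  | @cons a b c hadj q ih =>
    by_cases hb : b ∈ A
    · exact ih hb hv fun w hw => hp w (by simp [SimpleGraph.Walk.support_cons, hw])
    · exact ⟨a, b, hu, hp a (by simp), hp b (by simp [SimpleGraph.Walk.support_cons]),
        hb, hadj⟩

lemma exists_adj_reachIn_sdiff {S : Set V} {u c : V} (h : ReachIn G S u c) (huc : u ≠ c) :
    ∃ z, z ∈ S ∧ z ≠ c ∧ G.Adj c z ∧ ReachIn G (S \ {c}) u z := by
  obtain ⟨p, hp⟩ := h
  induction p with
  | nil => exact absurd rfl huc
  | @cons a b c hadj q ih =>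
    by_cases hb : b = c
    · subst hb
      exact ⟨a, hp a (by simp), huc, hadj.symm,
        ⟨SimpleGraph.Walk.nil, by simp [hp a (by simp), huc]⟩⟩
    · obtain ⟨z, hzS, hzc, hzadj, hzr⟩ := ih hb
        (fun w hw => hp w (by simp [SimpleGraph.Walk.support_cons, hw]))
      refine ⟨z, hzS, hzc, hzadj, ?_⟩
      obtain ⟨r, hr⟩ := hzr
      exact ⟨(SimpleGraph.Walk.cons hadj SimpleGraph.Walk.nil).append r, by
        intro w hw
        rcases (SimpleGraph.Walk.mem_support_append_iff _ _).1 hw with h | h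
        · simp only [SimpleGraph.Walk.support_cons, SimpleGraph.Walk.support_nil,
            List.mem_cons, List.mem_singleton] at h
          rcases h with rfl | rfl | h
          · exact ⟨hp w (by simp), huc⟩
          · exact ⟨hp w (by simp [SimpleGraph.Walk.support_cons]), hb⟩
          · cases h
        · exact hr w h⟩

lemma reachIn_avoid {S Z : Set V} {c u : V}
    (hcl : ∀ a ∈ Z, ∀ b, b ∈ S → b ≠ c → G.Adj a b → b ∈ Z)
    (h : ReachIn G S u c) (hu : u ∉ Z) :
    ReachIn G ((S \ Z) ∪ {c}) u c := by
  obtain ⟨p, hp⟩ := h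
  induction p with
  | nil => exact ⟨SimpleGraph.Walk.nil, by simp⟩
  | @cons a b c hadj q ih =>
    by_cases hac : a = c
    · subst hac; exact ⟨SimpleGraph.Walk.nil, by simp⟩
    · have hb : b ∉ Z := by
        intro hbZ
        exact hu (hcl b hbZ a (hp a (by simp)) hac hadj.symm)
      obtain ⟨r, hr⟩ := ih hcl hb (fun w hw => hp w (by simp [SimpleGraph.Walk.support_cons, hw]))
      refine ⟨SimpleGraph.Walk.cons hadj r, ?_⟩
      intro w hw
      simp only [SimpleGraph.Walk.support_cons, List.mem_cons] at hw
      rcases hw with rfl | hw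
      · exact Or.inl ⟨hp w (by simp), fun hwZ => hu hwZ⟩
      · exact hr w hw

lemma reachIn_of_induce_walk {S : Set V} {a b : ↥S} (p : (G.induce S).Walk a b) :
    ReachIn G S (a : V) (b : V) := by
  induction p with
  | @nil x => exact ⟨SimpleGraph.Walk.nil, by rintro w hw; simp at hw; subst hw; exact x.2⟩
  | @cons x y z hadj q ih =>
    obtain ⟨r, hr⟩ := ih
    have hadj' : G.Adj (x : V) (y : V) := hadj
    refine ⟨SimpleGraph.Walk.cons hadj' r, ?_⟩
    intro w hw
    simp only [SimpleGraph.Walk.support_cons, List.mem_cons] at hw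
    rcases hw with rfl | hw
    · exact x.2
    · exact hr w hw

lemma induce_reachable_of_reachIn {S : Set V} {u v : V} (h : ReachIn G S u v)
    (hu : u ∈ S) (hv : v ∈ S) : (G.induce S).Reachable ⟨u, hu⟩ ⟨v, hv⟩ := by
  obtain ⟨p, hp⟩ := h
  induction p with
  | nil => rfl
  | @cons a b c hadj q ih =>
    have hb : b ∈ S := hp b (by simp [SimpleGraph.Walk.support_cons])
    have h1 : (G.induce S).Adj ⟨a, hu⟩ ⟨b, hb⟩ := hadj
    exact (h1.reachable).trans (ih hb hv (fun w hw => hp w (by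
      simp [SimpleGraph.Walk.support_cons, hw])))

lemma induce_connected_iff {S : Set V} :
    (G.induce S).Connected ↔ S.Nonempty ∧ ∀ u ∈ S, ∀ v ∈ S, ReachIn G S u v := by
  constructor
  · intro hc
    obtain ⟨a⟩ := hc.nonempty
    refine ⟨⟨a, a.2⟩, fun u hu v hv => ?_⟩
    obtain ⟨p⟩ := hc.preconnected ⟨u, hu⟩ ⟨v, hv⟩
    exact reachIn_of_induce_walk p
  · rintro ⟨⟨a, ha⟩, h⟩
    have hne : Nonempty ↥S := ⟨⟨a, ha⟩⟩
    refine SimpleGraph.Connected.mk (fun u v => ?_)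
    have := induce_reachable_of_reachIn (h u u.2 v v.2) u.2 v.2
    simpa using this

/-- The invariant carried through the induction. -/
structure Inv [Fintype V] (G : SimpleGraph V) [DecidableRel G.Adj]
    (Y : Set V) (y : V) : Prop where
  hy : y ∈ Y
  hcard : ∃ z ∈ Y, z ≠ y
  hconn : ∀ u ∈ Y, ∀ v ∈ Y, ReachIn G Y u v
  hext : ∀ u ∈ Yᶜ ∪ {y}, ReachIn G (Yᶜ ∪ {y}) u y
  hsep : ∀ a ∈ Y, a ≠ y → ∀ b, b ∉ Y → ¬ G.Adj a b
  hdeg : ∀ v ∈ Y, G.degree v = 3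


lemma terminal_case [Fintype V] [DecidableEq V] {G : SimpleGraph V} [DecidableRel G.Adj]
    {Y : Set V} {y : V} (inv : Inv G Y y)
    (P : ∀ v ∈ Y, ∀ u ∈ Y \ {v}, ∀ u' ∈ Y \ {v}, ReachIn G (Y \ {v}) u u') :
    IsBlock G Y ∧ {v ∈ Y | IsCutVertex G v}.Subsingleton ∧ ∀ v ∈ Y, G.degree v = 3 := by
  obtain ⟨z, hzY, hzy⟩ := inv.hcard
  have hne : ∀ v : V, ∃ w, w ∈ Y \ {v} := by
    intro v
    by_cases hv : v = y
    · exact ⟨z, hzY, by simp [hv, hzy]⟩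
    · exact ⟨y, inv.hy, fun h => hv (Set.mem_singleton_iff.1 h).symm⟩
  have hYconn : (G.induce Y).Connected := induce_connected_iff.2 ⟨⟨y, inv.hy⟩, inv.hconn⟩
  have hNCV : NoCutVertexIn G Y := by
    intro v hv
    right
    exact induce_connected_iff.2 ⟨hne v, P v hv⟩
  have hkey : ∀ v ∈ Y, v ≠ y → ¬ IsCutVertex G v := by
    rintro v hv hvy ⟨-, hnc⟩
    apply hnc
    refine induce_connected_iff.2 ⟨⟨y, fun h : y = v => hvy h.symm⟩, ?_⟩
    have hyv : y ∈ Y \ {v} := ⟨inv.hy, fun h => hvy (Set.mem_singleton_iff.1 h).symm⟩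
    have hreach : ∀ u, u ≠ v → ReachIn G {u : V | u ≠ v} u y := by
      intro u huv
      by_cases huY : u ∈ Y
      · exact (P v hv u ⟨huY, huv⟩ y hyv).mono (fun w hw => hw.2)
      · refine (inv.hext u (Or.inl huY)).mono ?_
        rintro w (hw | hw)
        · exact fun h => hw (h ▸ hv)
        · simp only [Set.mem_singleton_iff] at hw
          exact fun h : w = v => hvy ((hw ▸ h : y = v)).symm
    exact fun u hu u' hu' => (hreach u hu).trans (hreach u' hu').symm
  refine ⟨⟨hYconn, hNCV, ?_⟩, ?_, inv.hdeg⟩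
  · intro B' hYB' hB'c hB'n
    refine Set.Subset.antisymm ?_ hYB'
    intro q hq
    by_contra hqY
    have hyB' : y ∈ B' := hYB' inv.hy
    rcases hB'n y hyB' with h1 | h1
    · exact hzy (by simpa [h1] using hYB' hzY)
    · obtain ⟨-, hr⟩ := induce_connected_iff.1 h1
      have hz' : z ∈ B' \ {y} := ⟨hYB' hzY, hzy⟩
      have hq' : q ∈ B' \ {y} := ⟨hq, fun h => hqY ((Set.mem_singleton_iff.1 h) ▸ inv.hy)⟩
      obtain ⟨a, b, haY, haS, hbS, hbY, hadj⟩ :=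
        exists_crossing_edge (A := Y) (hr z hz' q hq') hzY hqY
      exact inv.hsep a haY (fun h => haS.2 (by simp [h])) b hbY hadj
  · intro a ha b hb
    have h1 : a = y := by
      by_contra h
      exact hkey a ha.1 h ha.2
    have h2 : b = y := by
      by_contra h
      exact hkey b hb.1 h hb.2
    rw [h1, h2]

lemma middle [Fintype V] [DecidableEq V] (G : SimpleGraph V) [DecidableRel G.Adj] :
    ∀ (n : ℕ) (Y : Set V) (y : V), Y.ncard ≤ n → Inv G Y y →
    ∃ B : Set V, IsBlock G B ∧ {v ∈ B | IsCutVertex G v}.Subsingleton ∧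
      ∀ v ∈ B, G.degree v = 3 := by
  intro n
  induction n with
  | zero =>
    intro Y y hn inv
    have : 0 < Y.ncard := (Set.ncard_pos (Set.toFinite Y)).2 ⟨y, inv.hy⟩
    omega
  | succ n ih =>
    intro Y y hn inv
    by_cases hP : ∀ v ∈ Y, ∀ u ∈ Y \ {v}, ∀ u' ∈ Y \ {v}, ReachIn G (Y \ {v}) u u'
    · obtain ⟨h1, h2, h3⟩ := terminal_case inv hP
      exact ⟨Y, h1, h2, h3⟩
    · push_neg at hP
      obtain ⟨c, hcY, u, hu, u', hu', hnr⟩ := hP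
      -- choose the start of the component and a vertex missing from `Y'`
      obtain ⟨u₀, hu₀, t, htY, htc, htZ, hyZ⟩ :
          ∃ u₀, u₀ ∈ Y \ {c} ∧ ∃ t, t ∈ Y ∧ t ≠ c ∧ ¬ ReachIn G (Y \ {c}) u₀ t ∧
            (y = c ∨ ¬ ReachIn G (Y \ {c}) u₀ y) := by
        by_cases hyc : y = c
        · exact ⟨u, hu, u', hu'.1, fun h => hu'.2 (Set.mem_singleton_iff.2 h), hnr,
            Or.inl hyc⟩
        · have hyY : y ∈ Y \ {c} := ⟨inv.hy, fun h => hyc (Set.mem_singleton_iff.1 h)⟩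
          by_cases hry : ReachIn G (Y \ {c}) u y
          · refine ⟨u', hu', y, inv.hy, hyc, ?_, Or.inr ?_⟩
            · exact fun h => hnr (hry.trans h.symm)
            · exact fun h => hnr (hry.trans h.symm)
          · exact ⟨u, hu, y, inv.hy, hyc, hry, Or.inr hry⟩
      set Z : Set V := {z | z ∈ Y \ {c} ∧ ReachIn G (Y \ {c}) u₀ z} with hZdef
      have hu₀Z : u₀ ∈ Z := ⟨hu₀, ReachIn.refl hu₀⟩
      have hyZ' : y ∉ Z := by
        rcases hyZ with h | h
        · exact fun hz => hz.1.2 (Set.mem_singleton_iff.2 h)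
        · exact fun hz => h hz.2
      have htZ' : t ∉ Z := fun h => htZ h.2
      have hZY : Z ⊆ Y \ {c} := fun z hz => hz.1
      have hcl : ∀ a ∈ Z, ∀ b, b ∈ Y → b ≠ c → G.Adj a b → b ∈ Z := by
        intro a ha b hbY hbc hadj
        have hb : b ∈ Y \ {c} := ⟨hbY, fun h => hbc (Set.mem_singleton_iff.1 h)⟩
        exact ⟨hb, ha.2.trans (ReachIn.single hadj ha.1 hb)⟩
      have hu₀c : u₀ ≠ c := fun h => hu₀.2 (Set.mem_singleton_iff.2 h)
      obtain ⟨z₀, hz₀Y, hz₀c, hcz₀, hz₀r⟩ :=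
        exists_adj_reachIn_sdiff (inv.hconn u₀ hu₀.1 c hcY) hu₀c
      have hz₀Z : z₀ ∈ Z := ⟨⟨hz₀Y, fun h => hz₀c (Set.mem_singleton_iff.1 h)⟩, hz₀r⟩
      -- reach inside Z
      have hinZ : ∀ a ∈ Z, ReachIn G Z u₀ a := by
        intro a ha
        exact reachIn_reachSet ha.2
      set Y' : Set V := Z ∪ {c} with hY'def
      have hY'Y : Y' ⊆ Y := by
        rintro w (hw | hw)
        · exact (hZY hw).1
        · exact (Set.mem_singleton_iff.1 hw) ▸ hcY
      have hcY' : c ∈ Y' := Or.inr rfl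
      have hreachc : ∀ a ∈ Y', ReachIn G Y' a c := by
        rintro a (ha | ha)
        · have h1 : ReachIn G Z a z₀ := ((hinZ a ha).symm).trans (hinZ z₀ hz₀Z)
          exact (h1.mono Set.subset_union_left).trans
            (ReachIn.single hcz₀.symm (Or.inl hz₀Z) hcY')
        · obtain rfl := Set.mem_singleton_iff.1 ha
          exact ReachIn.refl hcY'
      have havoid : ∀ w ∈ (Y \ Z) ∪ {c}, w ∈ Y'ᶜ ∪ {c} := by
        rintro w (hw | hw)
        · by_cases hwc : w = c
          · exact Or.inr (Set.mem_singleton_iff.2 hwc)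
          · refine Or.inl ?_
            rintro (h | h)
            · exact hw.2 h
            · exact hwc (Set.mem_singleton_iff.1 h)
        · exact Or.inr hw
      have hextc : ∀ w ∈ Y'ᶜ ∪ {c}, ReachIn G (Y'ᶜ ∪ {c}) w c := by
        rintro w (hw | hw)
        · by_cases hwY : w ∈ Y
          · have hwZ : w ∉ Z := fun h => hw (Or.inl h)
            exact (reachIn_avoid hcl (inv.hconn w hwY c hcY) hwZ).mono havoid
          · have h2 := inv.hext w (Or.inl hwY)
            have hsub : Yᶜ ∪ {y} ⊆ Y'ᶜ ∪ {c} := by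
              rintro v (hv | hv)
              · by_cases hvc : v = c
                · exact Or.inr (Set.mem_singleton_iff.2 hvc)
                · exact Or.inl (fun h => hv (hY'Y h))
              · rcases Set.mem_singleton_iff.1 hv with rfl
                by_cases hvc : v = c
                · exact Or.inr (Set.mem_singleton_iff.2 hvc)
                · refine Or.inl ?_
                  rintro (h | h)
                  · exact hyZ' h
                  · exact hvc (Set.mem_singleton_iff.1 h)
            have h3 : ReachIn G (Y'ᶜ ∪ {c}) w y := h2.mono hsub
            rcases hyZ with rfl | hy2
            · exact h3
            · exact h3.trans ((reachIn_avoid hcl (inv.hconn y inv.hy c hcY) hyZ').mono havoid)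
        · obtain rfl := Set.mem_singleton_iff.1 hw
          exact ReachIn.refl (Or.inr rfl)
      have inv' : Inv G Y' c := by
        refine ⟨hcY', ⟨u₀, Or.inl hu₀Z, hu₀c⟩, ?_, ?_, ?_, ?_⟩
        · exact fun a ha b hb => (hreachc a ha).trans (hreachc b hb).symm
        · exact fun w hw => hextc w hw
        · rintro a haY' hac b hbY' hadj
          have haZ : a ∈ Z := by
            rcases haY' with h | h
            · exact h
            · exact absurd (Set.mem_singleton_iff.1 h) hac
          by_cases hbY : b ∈ Y
          · have hbc : b ≠ c := fun h => hbY' (h ▸ hcY')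
            exact hbY' (Or.inl (hcl a haZ b hbY hbc hadj))
          · have hay : a ≠ y := fun h => hyZ' (h ▸ haZ)
            exact inv.hsep a (hZY haZ).1 hay b hbY hadj
        · exact fun v hv => inv.hdeg v (hY'Y hv)
      have hYne : Y' ≠ Y := by
        intro h
        have : t ∈ Y' := h ▸ htY
        rcases this with h' | h'
        · exact htZ' h'
        · exact htc (Set.mem_singleton_iff.1 h')
      have hss : Y' ⊂ Y := lt_of_le_of_ne hY'Y hYne
      have hlt : Y'.ncard < Y.ncard := Set.ncard_lt_ncard hss (Set.toFinite Y)
      exact ih Y' c (by omega) inv'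

lemma reachIn_of_le_reachable {H : SimpleGraph V} (hle : H ≤ G) {S : Set V}
    (hScl : ∀ a ∈ S, ∀ b, H.Adj a b → b ∈ S) {u v : V}
    (h : H.Reachable u v) (hu : u ∈ S) : ReachIn G S u v := by
  obtain ⟨p⟩ := h
  induction p with
  | nil => exact ReachIn.refl hu
  | @cons a b c hadj q ih =>
    have hb : b ∈ S := hScl a hu b hadj
    exact (ReachIn.single (hle hadj) hu hb).trans (ih hb)

lemma init [Fintype V] [DecidableEq V] (G : SimpleGraph V) [DecidableRel G.Adj]
    (hconn : G.Connected)
    {x y : V} (hadj : G.Adj x y)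
    (hbr : ¬ (G \ SimpleGraph.fromEdgeSet {s(x,y)}).Reachable x y)
    (hdegy : ∀ v, (G \ SimpleGraph.fromEdgeSet {s(x,y)}).Reachable y v → G.degree v = 3) :
    Inv G {v | (G \ SimpleGraph.fromEdgeSet {s(x,y)}).Reachable y v} y := by
  set H := G \ SimpleGraph.fromEdgeSet {s(x,y)} with hHdef
  have hle : H ≤ G := sdiff_le
  have hHadj : ∀ a b : V, G.Adj a b → s(a,b) ≠ s(x,y) → H.Adj a b := by
    intro a b hab he
    rw [hHdef, SimpleGraph.sdiff_adj, SimpleGraph.fromEdgeSet_adj]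
    exact ⟨hab, fun h => he (by simpa using h.1)⟩
  set Y : Set V := {v | H.Reachable y v} with hYdef
  have hyY : y ∈ Y := SimpleGraph.Reachable.refl y
  have hYcl : ∀ a ∈ Y, ∀ b, H.Adj a b → b ∈ Y := by
    intro a ha b hab
    exact SimpleGraph.Reachable.trans ha hab.reachable
  have hxY : x ∉ Y := fun h => hbr h.symm
  have hCcl : ∀ a ∈ Yᶜ, ∀ b, H.Adj a b → b ∈ Yᶜ := by
    intro a ha b hab hb
    exact ha (hYcl b hb a hab.symm)
  -- every vertex outside Y is H-reachable from x
  have hout : ∀ v, v ∉ Y → H.Reachable x v := by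
    have main : ∀ (u v : V) (p : G.Walk u v),
        (H.Reachable y u ∨ H.Reachable x u) → (H.Reachable y v ∨ H.Reachable x v) := by
      intro u v p
      induction p with
      | nil => exact id
      | @cons a b c hab q ih =>
        intro hstart
        apply ih
        by_cases he : s(a,b) = s(x,y)
        · rw [Sym2.eq_iff] at he
          rcases he with ⟨rfl, rfl⟩ | ⟨rfl, rfl⟩
          · exact Or.inl (SimpleGraph.Reachable.refl _)
          · exact Or.inr (SimpleGraph.Reachable.refl _)
        · have hH : H.Adj a b := hHadj a b hab he
          rcases hstart with h | h
          · exact Or.inl (h.trans hH.reachable)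
          · exact Or.inr (h.trans hH.reachable)
    intro v hv
    obtain ⟨p⟩ := hconn y v
    rcases main y v p (Or.inl (SimpleGraph.Reachable.refl y)) with h | h
    · exact absurd h hv
    · exact h
  refine ⟨hyY, ?_, ?_, ?_, ?_, fun v hv => hdegy v hv⟩
  · -- a second vertex in Y
    have h3 : G.degree y = 3 := hdegy y (SimpleGraph.Reachable.refl y)
    have hex : ∃ b, G.Adj y b ∧ b ≠ x := by
      by_contra hno
      push_neg at hno
      have hsub : G.neighborFinset y ⊆ {x} := by
        intro b hb
        rw [SimpleGraph.mem_neighborFinset] at hb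
        exact Finset.mem_singleton.2 (hno b hb)
      have hle1 : G.degree y ≤ 1 := by
        have h := Finset.card_le_card hsub
        rw [SimpleGraph.card_neighborFinset_eq_degree, Finset.card_singleton] at h
        exact h
      omega
    obtain ⟨b, hyb, hbx⟩ := hex
    have he : s(y,b) ≠ s(x,y) := by
      intro he
      rw [Sym2.eq_iff] at he
      rcases he with ⟨rfl, -⟩ | ⟨-, rfl⟩
      · exact hadj.ne rfl
      · exact hbx rfl
    exact ⟨b, hYcl y hyY b (hHadj y b hyb he), hyb.ne'⟩
  · -- internal connectivity
    intro u hu v hv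
    have h1 : ReachIn G Y y u := reachIn_of_le_reachable hle hYcl hu hyY
    have h2 : ReachIn G Y y v := reachIn_of_le_reachable hle hYcl hv hyY
    exact h1.symm.trans h2
  · -- exterior connectivity
    rintro u (hu | hu)
    · have hxr : H.Reachable x u := hout u hu
      have h1 : ReachIn G Yᶜ x u := reachIn_of_le_reachable hle hCcl hxr hxY
      have h2 : ReachIn G (Yᶜ ∪ {y}) u x := (h1.mono Set.subset_union_left).symm
      exact h2.trans (ReachIn.single hadj (Or.inl hxY) (Or.inr rfl))
    · obtain rfl := Set.mem_singleton_iff.1 hu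
      exact ReachIn.refl (Or.inr rfl)
  · -- separation
    intro a ha hay b hb hab
    by_cases he : s(a,b) = s(x,y)
    · rw [Sym2.eq_iff] at he
      rcases he with ⟨rfl, rfl⟩ | ⟨rfl, rfl⟩
      · exact hxY ha
      · exact hay rfl
    · exact hb (hYcl a ha b (hHadj a b hab he))

end PendantAux

/-- A connected graph with maximum degree at most 3 that contains a bridge and has at
most one vertex of degree less than 3 contains a pendant block (a block with at most
one cut vertex of the graph) all of whose vertices have degree 3. -/
theorem exists_pendant_block_of_degree_three {V : Type*} [Fintype V] [DecidableEq V]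
    (G : SimpleGraph V) [DecidableRel G.Adj]
    (hconn : G.Connected) (hdeg : ∀ v : V, G.degree v ≤ 3)
    (hbridge : ∃ e : Sym2 V, G.IsBridge e)
    (hone : {v : V | G.degree v < 3}.Subsingleton) :
    ∃ B : Set V, IsBlock G B ∧ {v ∈ B | IsCutVertex G v}.Subsingleton ∧
      ∀ v ∈ B, G.degree v = 3 := by
  classical
  obtain ⟨e, hbr⟩ := hbridge
  induction e using Sym2.ind with
  | _ x y =>
  rw [SimpleGraph.isBridge_iff] at hbr
  have hnr := hbr
  have hadj : G.Adj x y := by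
    by_contra hna
    apply hnr
    have hdis : G.deleteEdges {s(x,y)} = G := by
      rw [SimpleGraph.deleteEdges_eq_self, Set.disjoint_singleton_right]
      exact hna
    rw [hdis]
    exact hconn x y
  by_cases hside : ∀ v, (G \ SimpleGraph.fromEdgeSet {s(x,y)}).Reachable y v → G.degree v = 3
  · have inv := PendantAux.init G hconn hadj hnr hside
    exact PendantAux.middle G _ _ _ le_rfl inv
  · push_neg at hside
    obtain ⟨v0, hv0r, hv0d⟩ := hside
    have hswap : s(y,x) = s(x,y) := Sym2.eq_swap
    have hxside : ∀ v, (G \ SimpleGraph.fromEdgeSet {s(y,x)}).Reachable x v →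
        G.degree v = 3 := by
      intro v hvr
      rw [hswap] at hvr
      by_contra hv3
      have h1 : v ∈ {v : V | G.degree v < 3} := lt_of_le_of_ne (hdeg v) hv3
      have h2 : v0 ∈ {v : V | G.degree v < 3} := lt_of_le_of_ne (hdeg v0) hv0d
      have hveq : v = v0 := hone h1 h2
      subst hveq
      exact hnr (hvr.trans hv0r.symm)
    have hnr' : ¬ (G \ SimpleGraph.fromEdgeSet {s(y,x)}).Reachable y x := by
      rw [hswap]; exact fun h => hnr h.symm
    have inv := PendantAux.init G hconn hadj.symm hnr' hxside
    exact PendantAux.middle G _ _ _ le_rfl inv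
end

section
/- The complement of the cycle C_6 on six vertices has star chromatic index exactly 6. -/

abbrev Gc : SimpleGraph (Fin 6) := (SimpleGraph.cycleGraph 6)ᶜ

def σ6 : Sym2 (Fin 6) → Fin 6 := fun e =>
  if e = s(0,2) then 0 else if e = s(0,3) then 1 else if e = s(0,4) then 2
  else if e = s(1,3) then 0 else if e = s(1,4) then 3 else if e = s(1,5) then 2
  else if e = s(2,4) then 4 else if e = s(2,5) then 5 else 4

theorem key_path : ∀ v0 v1 v2 v3 v4 : Fin 6, Gc.Adj v0 v1 → Gc.Adj v1 v2 → Gc.Adj v2 v3 →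
    Gc.Adj v3 v4 → List.Nodup [v0,v1,v2,v3,v4] →
    ¬ ∃ a b : Fin 6, ∀ e ∈ [s(v0,v1), s(v1,v2), s(v2,v3), s(v3,v4)], σ6 e = a ∨ σ6 e = b := by
  decide

theorem paths6 : ∀ ⦃u v : Fin 6⦄ (p : Gc.Walk u v), p.IsPath → p.length = 4 →
      ¬ ∃ a b : Fin 6, ∀ e ∈ p.edges, σ6 e = a ∨ σ6 e = b := by
  intro u v p hp hl
  cases p with
  | nil => simp at hl
  | cons h1 q =>
  cases q with
  | nil => simp at hl
  | cons h2 q =>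
  cases q with
  | nil => simp at hl
  | cons h3 q =>
  cases q with
  | nil => simp at hl
  | cons h4 q =>
  cases q with
  | cons h5 q => simp [SimpleGraph.Walk.length_cons] at hl
  | nil =>
    rw [SimpleGraph.Walk.isPath_def] at hp
    simp [SimpleGraph.Walk.support_cons] at hp
    exact key_path _ _ _ _ _ h1 h2 h3 h4 (by simp; tauto)

theorem key_cycle : ∀ v0 v1 v2 v3 : Fin 6, Gc.Adj v0 v1 → Gc.Adj v1 v2 → Gc.Adj v2 v3 →
    Gc.Adj v3 v0 → List.Nodup [v0,v1,v2,v3] →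
    ¬ ∃ a b : Fin 6, ∀ e ∈ [s(v0,v1), s(v1,v2), s(v2,v3), s(v3,v0)], σ6 e = a ∨ σ6 e = b := by
  decide

theorem cycles6 : ∀ ⦃u : Fin 6⦄ (p : Gc.Walk u u), p.IsCycle → p.length = 4 →
      ¬ ∃ a b : Fin 6, ∀ e ∈ p.edges, σ6 e = a ∨ σ6 e = b := by
  intro u p hp hl
  cases p with
  | nil => simp at hl
  | cons h1 q =>
  cases q with
  | nil => simp at hl
  | cons h2 q =>
  cases q with
  | nil => simp at hl
  | cons h3 q =>
  cases q with
  | cons h4 q =>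
    cases q with
    | cons h5 q => simp [SimpleGraph.Walk.length_cons] at hl
    | nil =>
      have hnd := hp.2
      simp [SimpleGraph.Walk.support_cons] at hnd
      exact key_cycle _ _ _ _ h1 h2 h3 h4 (by simp; tauto)
  | nil => simp at hl

theorem proper6 : ∀ ⦃e f : Sym2 (Fin 6)⦄, e ∈ Gc.edgeSet → f ∈ Gc.edgeSet → e ≠ f →
      (∃ v, v ∈ e ∧ v ∈ f) → σ6 e ≠ σ6 f := by decide

def threeDistinct (a b c d : Fin 5) : Prop :=
  (a ≠ b ∧ a ≠ c ∧ b ≠ c) ∨ (a ≠ b ∧ a ≠ d ∧ b ≠ d) ∨ (a ≠ c ∧ a ≠ d ∧ c ≠ d) ∨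
    (b ≠ c ∧ b ≠ d ∧ c ≠ d)

instance (a b c d : Fin 5) : Decidable (threeDistinct a b c d) := by
  unfold threeDistinct; infer_instance

theorem nb_three (c1 c2 c3 c4 : Fin 5) (h : ¬ threeDistinct c1 c2 c3 c4) :
    ∃ a b : Fin 5, (c1 = a ∨ c1 = b) ∧ (c2 = a ∨ c2 = b) ∧ (c3 = a ∨ c3 = b) ∧ (c4 = a ∨ c4 = b) := by
  revert h; revert c1 c2 c3 c4; decide

theorem comp_star {σ : Sym2 (Fin 6) → Fin 5} (h : IsStarEdgeColoring Gc σ) (π : Fin 5 ≃ Fin 5) :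
    IsStarEdgeColoring Gc (fun e => π (σ e)) := by
  obtain ⟨h1, h2, h3⟩ := h
  refine ⟨fun e f he hf hne hsh heq => h1 he hf hne hsh (π.injective heq), ?_, ?_⟩
  · intro u v p hp hl ⟨a, b, hab⟩
    exact h2 p hp hl ⟨π.symm a, π.symm b, fun e he => by
      rcases hab e he with h' | h'
      · exact Or.inl (by rw [← h']; simp)
      · exact Or.inr (by rw [← h']; simp)⟩
  · intro u p hp hl ⟨a, b, hab⟩
    exact h3 p hp hl ⟨π.symm a, π.symm b, fun e he => by
      rcases hab e he with h' | h'
      · exact Or.inl (by rw [← h']; simp)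
      · exact Or.inr (by rw [← h']; simp)⟩

theorem exists_perm (c0 c1 c2 : Fin 5) (h01 : c0 ≠ c1) (h02 : c0 ≠ c2) (h12 : c1 ≠ c2) :
    ∃ π : Fin 5 ≃ Fin 5, π c0 = 0 ∧ π c1 = 1 ∧ π c2 = 2 := by
  let π1 := Equiv.swap 0 c0
  let π2 := Equiv.swap 1 (π1 c1)
  let π3 := Equiv.swap 2 (π2 (π1 c2))
  have e0 : π1 c0 = 0 := Equiv.swap_apply_right 0 c0
  have hA : π1 c1 ≠ 0 := by rw [← e0]; exact π1.injective.ne (Ne.symm h01)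
  have hB : π1 c2 ≠ 0 := by rw [← e0]; exact π1.injective.ne (Ne.symm h02)
  have hAB : π1 c1 ≠ π1 c2 := π1.injective.ne h12
  have e1 : π2 (π1 c1) = 1 := Equiv.swap_apply_right _ _
  have f0 : π2 0 = 0 := Equiv.swap_apply_of_ne_of_ne (by decide) (Ne.symm hA)
  have hC : π2 (π1 c2) ≠ 0 := by rw [← f0]; exact π2.injective.ne hB
  have hD : π2 (π1 c2) ≠ 1 := by rw [← e1]; exact π2.injective.ne (Ne.symm hAB)
  have e2 : π3 (π2 (π1 c2)) = 2 := Equiv.swap_apply_right _ _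
  have g0 : π3 0 = 0 := Equiv.swap_apply_of_ne_of_ne (by decide) (Ne.symm hC)
  have g1 : π3 1 = 1 := Equiv.swap_apply_of_ne_of_ne (by decide) (Ne.symm hD)
  exact ⟨(π1.trans π2).trans π3, by simp [Equiv.trans_apply, e0, f0, g0],
    by simp [Equiv.trans_apply, e1, g1], by simp [Equiv.trans_apply, e2]⟩

theorem star_path4 {σ : Sym2 (Fin 6) → Fin 5} (h : IsStarEdgeColoring Gc σ)
    {v0 v1 v2 v3 v4 : Fin 6} (a01 : Gc.Adj v0 v1) (a12 : Gc.Adj v1 v2) (a23 : Gc.Adj v2 v3)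
    (a34 : Gc.Adj v3 v4) (hnd : List.Nodup [v0,v1,v2,v3,v4]) :
    threeDistinct (σ s(v0,v1)) (σ s(v1,v2)) (σ s(v2,v3)) (σ s(v3,v4)) := by
  have hne := h.2.1 (SimpleGraph.Walk.cons a01 (SimpleGraph.Walk.cons a12
      (SimpleGraph.Walk.cons a23 (SimpleGraph.Walk.cons a34 SimpleGraph.Walk.nil))))
      (by rw [SimpleGraph.Walk.isPath_def]; simpa using hnd) rfl
  by_contra hc
  obtain ⟨a, b, k1, k2, k3, k4⟩ := nb_three _ _ _ _ hc
  exact hne ⟨a, b, by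
    simp only [SimpleGraph.Walk.edges_cons, SimpleGraph.Walk.edges_nil, List.forall_mem_cons,
      List.forall_mem_nil]
    exact ⟨k1, k2, k3, k4, by simp⟩⟩

theorem star_cycle4 {σ : Sym2 (Fin 6) → Fin 5} (h : IsStarEdgeColoring Gc σ)
    {v0 v1 v2 v3 : Fin 6} (a01 : Gc.Adj v0 v1) (a12 : Gc.Adj v1 v2) (a23 : Gc.Adj v2 v3)
    (a30 : Gc.Adj v3 v0) (hnd : List.Nodup [v0,v1,v2,v3]) :
    threeDistinct (σ s(v0,v1)) (σ s(v1,v2)) (σ s(v2,v3)) (σ s(v3,v0)) := by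
  simp only [List.nodup_cons, List.mem_cons, List.not_mem_nil, or_false, List.mem_singleton,
    List.nodup_nil, and_true, not_or] at hnd
  obtain ⟨⟨h01, h02, h03⟩, ⟨h12, h13⟩, h23⟩ := hnd
  have hcyc : (SimpleGraph.Walk.cons a01 (SimpleGraph.Walk.cons a12
      (SimpleGraph.Walk.cons a23 (SimpleGraph.Walk.cons a30 SimpleGraph.Walk.nil)))).IsCycle := by
    rw [SimpleGraph.Walk.isCycle_def]
    refine ⟨?_, by simp, ?_⟩
    · rw [SimpleGraph.Walk.isTrail_def]
      simp [Sym2.eq, Sym2.rel_iff']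
      refine ⟨⟨?_, ?_, ?_⟩, ?_, ?_, ?_⟩ <;> tauto
    · simp [SimpleGraph.Walk.support_cons]
      tauto
  have hne := h.2.2 (SimpleGraph.Walk.cons a01 (SimpleGraph.Walk.cons a12
      (SimpleGraph.Walk.cons a23 (SimpleGraph.Walk.cons a30 SimpleGraph.Walk.nil)))) hcyc rfl
  by_contra hc
  obtain ⟨a, b, k1, k2, k3, k4⟩ := nb_three _ _ _ _ hc
  exact hne ⟨a, b, by
    simp only [SimpleGraph.Walk.edges_cons, SimpleGraph.Walk.edges_nil, List.forall_mem_cons,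
      List.forall_mem_nil]
    exact ⟨k1, k2, k3, k4, by simp⟩⟩

def OKc (x03 x13 x14 x15 x25 x35 : Fin 5) : Prop :=
  (0:Fin 5) ≠ x03 ∧
  (0:Fin 5) ≠ x25 ∧
  x03 ≠ (2:Fin 5) ∧
  x03 ≠ x13 ∧
  x03 ≠ x35 ∧
  (2:Fin 5) ≠ x14 ∧
  x13 ≠ x14 ∧
  x13 ≠ x15 ∧
  x13 ≠ x35 ∧
  x14 ≠ x15 ∧
  x14 ≠ (1:Fin 5) ∧
  x15 ≠ x25 ∧
  x15 ≠ x35 ∧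
  (1:Fin 5) ≠ x25 ∧
  x25 ≠ x35 ∧
  threeDistinct ((0:Fin 5)) ((1:Fin 5)) (x14) (x13) ∧
  threeDistinct ((0:Fin 5)) ((1:Fin 5)) (x14) (x15) ∧
  threeDistinct ((0:Fin 5)) (x25) (x15) (x13) ∧
  threeDistinct ((0:Fin 5)) (x25) (x15) (x14) ∧
  threeDistinct ((0:Fin 5)) (x25) (x35) (x13) ∧
  threeDistinct (x03) (x13) (x14) ((1:Fin 5)) ∧
  threeDistinct (x03) (x13) (x15) (x25) ∧
  threeDistinct (x03) (x35) (x15) (x14) ∧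
  threeDistinct (x03) (x35) (x25) ((1:Fin 5)) ∧
  threeDistinct ((2:Fin 5)) (x14) (x13) (x35) ∧
  threeDistinct ((2:Fin 5)) (x14) (x15) (x25) ∧
  threeDistinct ((2:Fin 5)) (x14) (x15) (x35) ∧
  threeDistinct ((2:Fin 5)) ((1:Fin 5)) (x25) (x15) ∧
  threeDistinct ((2:Fin 5)) ((1:Fin 5)) (x25) (x35) ∧
  threeDistinct (x13) (x03) ((0:Fin 5)) ((1:Fin 5)) ∧
  threeDistinct (x13) (x03) ((0:Fin 5)) (x25) ∧
  threeDistinct (x13) (x03) ((2:Fin 5)) ((1:Fin 5)) ∧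
  threeDistinct (x13) (x35) (x25) ((1:Fin 5)) ∧
  threeDistinct (x14) ((2:Fin 5)) ((0:Fin 5)) (x25) ∧
  threeDistinct (x14) ((2:Fin 5)) (x03) (x35) ∧
  threeDistinct (x14) ((1:Fin 5)) ((0:Fin 5)) (x03) ∧
  threeDistinct (x14) ((1:Fin 5)) (x25) (x35) ∧
  threeDistinct (x15) (x25) ((0:Fin 5)) (x03) ∧
  threeDistinct (x15) (x25) ((0:Fin 5)) ((2:Fin 5)) ∧
  threeDistinct (x15) (x35) (x03) ((0:Fin 5)) ∧
  threeDistinct (x15) (x35) (x03) ((2:Fin 5)) ∧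
  threeDistinct ((0:Fin 5)) (x03) (x13) (x14) ∧
  threeDistinct ((0:Fin 5)) (x03) (x13) (x15) ∧
  threeDistinct ((0:Fin 5)) ((2:Fin 5)) (x14) (x13) ∧
  threeDistinct ((0:Fin 5)) ((2:Fin 5)) (x14) (x15) ∧
  threeDistinct ((1:Fin 5)) ((2:Fin 5)) (x03) (x35) ∧
  threeDistinct ((1:Fin 5)) (x14) (x13) (x35) ∧
  threeDistinct ((1:Fin 5)) (x14) (x15) (x35) ∧
  threeDistinct (x25) (x35) (x03) ((2:Fin 5)) ∧
  threeDistinct (x25) (x35) (x13) (x14) ∧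
  threeDistinct (x03) ((2:Fin 5)) (x14) (x15) ∧
  threeDistinct (x03) ((2:Fin 5)) ((1:Fin 5)) (x25) ∧
  threeDistinct (x13) (x14) ((1:Fin 5)) (x25) ∧
  threeDistinct (x13) (x15) (x25) ((1:Fin 5)) ∧
  threeDistinct (x35) (x25) ((0:Fin 5)) ((2:Fin 5)) ∧
  threeDistinct ((2:Fin 5)) (x03) (x13) (x15) ∧
  threeDistinct ((1:Fin 5)) ((0:Fin 5)) (x03) (x35) ∧
  threeDistinct ((0:Fin 5)) (x25) (x35) (x03) ∧
  threeDistinct (x03) (x13) (x14) ((2:Fin 5)) ∧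
  threeDistinct (x14) ((1:Fin 5)) (x25) (x15)

set_option synthInstance.maxSize 3000 in
set_option synthInstance.maxHeartbeats 2000000 in
instance (x03 x13 x14 x15 x25 x35 : Fin 5) : Decidable (OKc x03 x13 x14 x15 x25 x35) := by
  unfold OKc; infer_instance

set_option maxHeartbeats 8000000 in
theorem final5 : ¬ ∃ x03 x13 x14 x15 x25 x35 : Fin 5, OKc x03 x13 x14 x15 x25 x35 := by decide


/-- The complement of the 6-cycle has star chromatic index exactly 6: it has a star
edge-coloring with 6 colors but none with 5 colors. -/
theorem complement_C6_star_chromatic_index_eq_six :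
    (∃ σ : Sym2 (Fin 6) → Fin 6, IsStarEdgeColoring (SimpleGraph.cycleGraph 6)ᶜ σ) ∧
      ¬ ∃ σ : Sym2 (Fin 6) → Fin 5, IsStarEdgeColoring (SimpleGraph.cycleGraph 6)ᶜ σ := by
  constructor
  · exact ⟨σ6, proper6, paths6, cycles6⟩
  · rintro ⟨σ, hσ⟩
    have d0 : σ s(0,2) ≠ σ s(2,4) :=
      hσ.1 (e := s(0,2)) (f := s(2,4)) (by decide) (by decide) (by decide) (by decide)
    have d1 : σ s(0,2) ≠ σ s(0,4) :=
      hσ.1 (e := s(0,2)) (f := s(0,4)) (by decide) (by decide) (by decide) (by decide)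
    have d2 : σ s(2,4) ≠ σ s(0,4) :=
      hσ.1 (e := s(2,4)) (f := s(0,4)) (by decide) (by decide) (by decide) (by decide)
    obtain ⟨π, hπ0, hπ1, hπ2⟩ := exists_perm _ _ _ d0 d1 d2
    have hg : IsStarEdgeColoring Gc (fun e => π (σ e)) := comp_star hσ π
    set g : Sym2 (Fin 6) → Fin 5 := fun e => π (σ e) with hgdef
    have h02 : g s(0,2) = 0 := hπ0
    have h24 : g s(2,4) = 1 := hπ1
    have h04 : g s(0,4) = 2 := hπ2
    have hsw0 : (s(2,0) : Sym2 (Fin 6)) = s(0,2) := Sym2.eq_swap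
    have hsw1 : (s(3,0) : Sym2 (Fin 6)) = s(0,3) := Sym2.eq_swap
    have hsw2 : (s(3,1) : Sym2 (Fin 6)) = s(1,3) := Sym2.eq_swap
    have hsw3 : (s(4,0) : Sym2 (Fin 6)) = s(0,4) := Sym2.eq_swap
    have hsw4 : (s(4,1) : Sym2 (Fin 6)) = s(1,4) := Sym2.eq_swap
    have hsw5 : (s(4,2) : Sym2 (Fin 6)) = s(2,4) := Sym2.eq_swap
    have hsw6 : (s(5,1) : Sym2 (Fin 6)) = s(1,5) := Sym2.eq_swap
    have hsw7 : (s(5,2) : Sym2 (Fin 6)) = s(2,5) := Sym2.eq_swap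
    have hsw8 : (s(5,3) : Sym2 (Fin 6)) = s(3,5) := Sym2.eq_swap
    have q0 : g s(0,2) ≠ g s(0,3) := hg.1 (e := s(0,2)) (f := s(0,3)) (by decide) (by decide) (by decide) (by decide)
    have q3 : g s(0,2) ≠ g s(2,5) := hg.1 (e := s(0,2)) (f := s(2,5)) (by decide) (by decide) (by decide) (by decide)
    have q4 : g s(0,3) ≠ g s(0,4) := hg.1 (e := s(0,3)) (f := s(0,4)) (by decide) (by decide) (by decide) (by decide)
    have q5 : g s(0,3) ≠ g s(1,3) := hg.1 (e := s(0,3)) (f := s(1,3)) (by decide) (by decide) (by decide) (by decide)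
    have q6 : g s(0,3) ≠ g s(3,5) := hg.1 (e := s(0,3)) (f := s(3,5)) (by decide) (by decide) (by decide) (by decide)
    have q7 : g s(0,4) ≠ g s(1,4) := hg.1 (e := s(0,4)) (f := s(1,4)) (by decide) (by decide) (by decide) (by decide)
    have q9 : g s(1,3) ≠ g s(1,4) := hg.1 (e := s(1,3)) (f := s(1,4)) (by decide) (by decide) (by decide) (by decide)
    have q10 : g s(1,3) ≠ g s(1,5) := hg.1 (e := s(1,3)) (f := s(1,5)) (by decide) (by decide) (by decide) (by decide)
    have q11 : g s(1,3) ≠ g s(3,5) := hg.1 (e := s(1,3)) (f := s(3,5)) (by decide) (by decide) (by decide) (by decide)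
    have q12 : g s(1,4) ≠ g s(1,5) := hg.1 (e := s(1,4)) (f := s(1,5)) (by decide) (by decide) (by decide) (by decide)
    have q13 : g s(1,4) ≠ g s(2,4) := hg.1 (e := s(1,4)) (f := s(2,4)) (by decide) (by decide) (by decide) (by decide)
    have q14 : g s(1,5) ≠ g s(2,5) := hg.1 (e := s(1,5)) (f := s(2,5)) (by decide) (by decide) (by decide) (by decide)
    have q15 : g s(1,5) ≠ g s(3,5) := hg.1 (e := s(1,5)) (f := s(3,5)) (by decide) (by decide) (by decide) (by decide)
    have q16 : g s(2,4) ≠ g s(2,5) := hg.1 (e := s(2,4)) (f := s(2,5)) (by decide) (by decide) (by decide) (by decide)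
    have q17 : g s(2,5) ≠ g s(3,5) := hg.1 (e := s(2,5)) (f := s(3,5)) (by decide) (by decide) (by decide) (by decide)
    have p0 := star_path4 hg (v0:=0) (v1:=2) (v2:=4) (v3:=1) (v4:=3) (by decide) (by decide) (by decide) (by decide) (by decide)
    have p1 := star_path4 hg (v0:=0) (v1:=2) (v2:=4) (v3:=1) (v4:=5) (by decide) (by decide) (by decide) (by decide) (by decide)
    have p2 := star_path4 hg (v0:=0) (v1:=2) (v2:=5) (v3:=1) (v4:=3) (by decide) (by decide) (by decide) (by decide) (by decide)
    have p3 := star_path4 hg (v0:=0) (v1:=2) (v2:=5) (v3:=1) (v4:=4) (by decide) (by decide) (by decide) (by decide) (by decide)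
    have p4 := star_path4 hg (v0:=0) (v1:=2) (v2:=5) (v3:=3) (v4:=1) (by decide) (by decide) (by decide) (by decide) (by decide)
    have p5 := star_path4 hg (v0:=0) (v1:=3) (v2:=1) (v3:=4) (v4:=2) (by decide) (by decide) (by decide) (by decide) (by decide)
    have p6 := star_path4 hg (v0:=0) (v1:=3) (v2:=1) (v3:=5) (v4:=2) (by decide) (by decide) (by decide) (by decide) (by decide)
    have p7 := star_path4 hg (v0:=0) (v1:=3) (v2:=5) (v3:=1) (v4:=4) (by decide) (by decide) (by decide) (by decide) (by decide)
    have p8 := star_path4 hg (v0:=0) (v1:=3) (v2:=5) (v3:=2) (v4:=4) (by decide) (by decide) (by decide) (by decide) (by decide)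
    have p9 := star_path4 hg (v0:=0) (v1:=4) (v2:=1) (v3:=3) (v4:=5) (by decide) (by decide) (by decide) (by decide) (by decide)
    have p10 := star_path4 hg (v0:=0) (v1:=4) (v2:=1) (v3:=5) (v4:=2) (by decide) (by decide) (by decide) (by decide) (by decide)
    have p11 := star_path4 hg (v0:=0) (v1:=4) (v2:=1) (v3:=5) (v4:=3) (by decide) (by decide) (by decide) (by decide) (by decide)
    have p12 := star_path4 hg (v0:=0) (v1:=4) (v2:=2) (v3:=5) (v4:=1) (by decide) (by decide) (by decide) (by decide) (by decide)
    have p13 := star_path4 hg (v0:=0) (v1:=4) (v2:=2) (v3:=5) (v4:=3) (by decide) (by decide) (by decide) (by decide) (by decide)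
    have p14 := star_path4 hg (v0:=1) (v1:=3) (v2:=0) (v3:=2) (v4:=4) (by decide) (by decide) (by decide) (by decide) (by decide)
    have p15 := star_path4 hg (v0:=1) (v1:=3) (v2:=0) (v3:=2) (v4:=5) (by decide) (by decide) (by decide) (by decide) (by decide)
    have p16 := star_path4 hg (v0:=1) (v1:=3) (v2:=0) (v3:=4) (v4:=2) (by decide) (by decide) (by decide) (by decide) (by decide)
    have p17 := star_path4 hg (v0:=1) (v1:=3) (v2:=5) (v3:=2) (v4:=4) (by decide) (by decide) (by decide) (by decide) (by decide)
    have p18 := star_path4 hg (v0:=1) (v1:=4) (v2:=0) (v3:=2) (v4:=5) (by decide) (by decide) (by decide) (by decide) (by decide)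
    have p19 := star_path4 hg (v0:=1) (v1:=4) (v2:=0) (v3:=3) (v4:=5) (by decide) (by decide) (by decide) (by decide) (by decide)
    have p20 := star_path4 hg (v0:=1) (v1:=4) (v2:=2) (v3:=0) (v4:=3) (by decide) (by decide) (by decide) (by decide) (by decide)
    have p21 := star_path4 hg (v0:=1) (v1:=4) (v2:=2) (v3:=5) (v4:=3) (by decide) (by decide) (by decide) (by decide) (by decide)
    have p22 := star_path4 hg (v0:=1) (v1:=5) (v2:=2) (v3:=0) (v4:=3) (by decide) (by decide) (by decide) (by decide) (by decide)
    have p23 := star_path4 hg (v0:=1) (v1:=5) (v2:=2) (v3:=0) (v4:=4) (by decide) (by decide) (by decide) (by decide) (by decide)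
    have p24 := star_path4 hg (v0:=1) (v1:=5) (v2:=3) (v3:=0) (v4:=2) (by decide) (by decide) (by decide) (by decide) (by decide)
    have p25 := star_path4 hg (v0:=1) (v1:=5) (v2:=3) (v3:=0) (v4:=4) (by decide) (by decide) (by decide) (by decide) (by decide)
    have p26 := star_path4 hg (v0:=2) (v1:=0) (v2:=3) (v3:=1) (v4:=4) (by decide) (by decide) (by decide) (by decide) (by decide)
    have p27 := star_path4 hg (v0:=2) (v1:=0) (v2:=3) (v3:=1) (v4:=5) (by decide) (by decide) (by decide) (by decide) (by decide)
    have p28 := star_path4 hg (v0:=2) (v1:=0) (v2:=4) (v3:=1) (v4:=3) (by decide) (by decide) (by decide) (by decide) (by decide)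
    have p29 := star_path4 hg (v0:=2) (v1:=0) (v2:=4) (v3:=1) (v4:=5) (by decide) (by decide) (by decide) (by decide) (by decide)
    have p30 := star_path4 hg (v0:=2) (v1:=4) (v2:=0) (v3:=3) (v4:=5) (by decide) (by decide) (by decide) (by decide) (by decide)
    have p31 := star_path4 hg (v0:=2) (v1:=4) (v2:=1) (v3:=3) (v4:=5) (by decide) (by decide) (by decide) (by decide) (by decide)
    have p32 := star_path4 hg (v0:=2) (v1:=4) (v2:=1) (v3:=5) (v4:=3) (by decide) (by decide) (by decide) (by decide) (by decide)
    have p33 := star_path4 hg (v0:=2) (v1:=5) (v2:=3) (v3:=0) (v4:=4) (by decide) (by decide) (by decide) (by decide) (by decide)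
    have p34 := star_path4 hg (v0:=2) (v1:=5) (v2:=3) (v3:=1) (v4:=4) (by decide) (by decide) (by decide) (by decide) (by decide)
    have p35 := star_path4 hg (v0:=3) (v1:=0) (v2:=4) (v3:=1) (v4:=5) (by decide) (by decide) (by decide) (by decide) (by decide)
    have p36 := star_path4 hg (v0:=3) (v1:=0) (v2:=4) (v3:=2) (v4:=5) (by decide) (by decide) (by decide) (by decide) (by decide)
    have p37 := star_path4 hg (v0:=3) (v1:=1) (v2:=4) (v3:=2) (v4:=5) (by decide) (by decide) (by decide) (by decide) (by decide)
    have p38 := star_path4 hg (v0:=3) (v1:=1) (v2:=5) (v3:=2) (v4:=4) (by decide) (by decide) (by decide) (by decide) (by decide)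
    have p39 := star_path4 hg (v0:=3) (v1:=5) (v2:=2) (v3:=0) (v4:=4) (by decide) (by decide) (by decide) (by decide) (by decide)
    have p40 := star_path4 hg (v0:=4) (v1:=0) (v2:=3) (v3:=1) (v4:=5) (by decide) (by decide) (by decide) (by decide) (by decide)
    have p41 := star_path4 hg (v0:=4) (v1:=2) (v2:=0) (v3:=3) (v4:=5) (by decide) (by decide) (by decide) (by decide) (by decide)
    have c0 := star_cycle4 hg (v0:=0) (v1:=2) (v2:=5) (v3:=3) (by decide) (by decide) (by decide) (by decide) (by decide)
    have c1 := star_cycle4 hg (v0:=0) (v1:=3) (v2:=1) (v3:=4) (by decide) (by decide) (by decide) (by decide) (by decide)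
    have c2 := star_cycle4 hg (v0:=1) (v1:=4) (v2:=2) (v3:=5) (by decide) (by decide) (by decide) (by decide) (by decide)
    simp only [hsw0, hsw1, hsw2, hsw3, hsw4, hsw5, hsw6, hsw7, hsw8] at *
    simp only [h02, h24, h04] at *
    exact final5 ⟨g s(0,3), g s(1,3), g s(1,4), g s(1,5), g s(2,5), g s(3,5), q0, q3, q4, q5, q6, q7, q9, q10, q11, q12, q13, q14, q15, q16, q17, p0, p1, p2, p3, p4, p5, p6, p7, p8, p9, p10, p11, p12, p13, p14, p15, p16, p17, p18, p19, p20, p21, p22, p23, p24, p25, p26, p27, p28, p29, p30, p31, p32, p33, p34, p35, p36, p37, p38, p39, p40, p41, c0, c1, c2⟩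
end
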